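/- arXiv:2405.16452 — 7 statements merged into one kernel-verified Lean document; each statement's English description precedes it below -/
import Mathlib

section
/- For every n ≥ 5, the maximum number of triples in a triple system on n vertices that is A⁺-free and B⁺-free equals C(n−1, 2), i.e. ex(n, A⁺B⁺) = (n−1)(n−2)/2. Moreover, a triple system on n vertices that is A⁺-free and B⁺-free and has exactly C(n−1, 2) triples must be a full star, i.e. there is a vertex x such that F consists of all 3-element subsets of the vertex set containing x. -/
/-- A triple system: a family of 3-element subsets of the vertex type. -/
def isTripleSystem {V : Type*} (F : Finset (Finset V)) : Prop :=
  ∀ t ∈ F, t.card = 3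

/-- `F` contains the configuration described by `pattern` (a list of triples on `Fin m`)
if there is an injection of `Fin m` into the vertex set mapping each triple of the
pattern to a member of `F`. -/
def containsConfig {V : Type*} [DecidableEq V] {m : ℕ}
    (F : Finset (Finset V)) (pattern : List (Finset (Fin m))) : Prop :=
  ∃ f : Fin m → V, Function.Injective f ∧ ∀ t ∈ pattern, t.image f ∈ F

/-- Configuration A: triples {1,2,4},{1,3,5},{2,3,6} on 6 vertices (0-indexed). -/
def configA : List (Finset (Fin 6)) := [{0,1,3}, {0,2,4}, {1,2,5}]

/-- Configuration B: triples {1,2,5},{1,3,4},{2,3,4} on 5 vertices (0-indexed). -/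
def configB : List (Finset (Fin 5)) := [{0,1,4}, {0,2,3}, {1,2,3}]

/-- Configuration C: triples {1,2,4},{1,3,4},{2,3,4} on 4 vertices (0-indexed). -/
def configC : List (Finset (Fin 4)) := [{0,1,3}, {0,2,3}, {1,2,3}]

/-- Configuration D: triples {1,2,3},{1,3,4},{2,3,5} on 5 vertices (0-indexed). -/
def configD : List (Finset (Fin 5)) := [{0,1,2}, {0,2,3}, {1,2,4}]


/-- Configuration A+: triples 123, 124, 135, 236 on 6 vertices (0-indexed). -/
def configAp : List (Finset (Fin 6)) := [{0,1,2}, {0,1,3}, {0,2,4}, {1,2,5}]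

/-- Configuration B+: triples 123, 125, 134, 234 on 5 vertices (0-indexed). -/
def configBp : List (Finset (Fin 5)) := [{0,1,2}, {0,1,4}, {0,2,3}, {1,2,3}]

/-! Let `F` be `A⁺`- and `B⁺`-free. If the three pairs of a triple `T ∈ F` each lie in a further
triple of `F`, the three new vertices coincide (distinct ones give `A⁺`, two equal and one
different give `B⁺`), so `T` spans a `K₄` with a fourth vertex, and the same argument shows that
no other triple meets this `K₄` in a pair. Hence every triple either has a private pair, lying in
no other triple, or lies in such a block. Charge each of the `k` blocks its six pairs and each
other triple one private pair; of the remaining `z` pairs, every non-block triple contains two,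
and these two determine it. So `|F| ≤ C(z, 2) + 4k` while `z + (|F| - 4k) + 6k = C(n, 2)`, which
gives `|F| ≤ C(n - 1, 2)`. In case of equality there are no blocks, `z = n - 1`, and any two of
the `z` remaining pairs lie in a common triple, hence meet; as `z ≥ 4` they share a vertex `x`,
and then every triple contains `x`. -/

open Finset

variable {V : Type*} [DecidableEq V]

theorem union_eq_of_mem_powersetCard_two {T q q' : Finset V} (hT : T.card = 3)
    (hq : q ∈ T.powersetCard 2) (hq' : q' ∈ T.powersetCard 2) (hne : q ≠ q') : q ∪ q' = T := by
  rw [mem_powersetCard] at hq hq'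
  have hinter : (q ∩ q').card < 2 := by
    by_contra! h
    exact hne ((eq_of_subset_of_card_le inter_subset_left (by omega)).symm.trans
      (eq_of_subset_of_card_le inter_subset_right (by omega)))
  have := card_union_add_card_inter q q'
  exact eq_of_subset_of_card_le (union_subset hq.1 hq'.1) (by omega)

theorem card_le_choose_two_of_erase_subset {F₁ U : Finset (Finset V)} {φ : Finset V → Finset V}
    (hF₁ : ∀ T ∈ F₁, T.card = 3) (hφ : ∀ T ∈ F₁, φ T ∈ T.powersetCard 2)
    (hU : ∀ T ∈ F₁, (T.powersetCard 2).erase (φ T) ⊆ U) (hU₂ : ∀ q ∈ U, q.card = 2) :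
    F₁.card ≤ U.card.choose 2 ∧
      (F₁.card = U.card.choose 2 → (U : Set (Finset V)).Intersecting) := by
  set Ψ := fun T : Finset V => (T.powersetCard 2).erase (φ T)
  have hΨ : ∀ T ∈ F₁, Ψ T ∈ U.powersetCard 2 := fun T hT => mem_powersetCard.mpr
    ⟨hU T hT, by rw [card_erase_of_mem (hφ T hT), card_powersetCard, hF₁ T hT]; rfl⟩
  have hunion : ∀ T ∈ F₁, ∀ q q', q ≠ q' → Ψ T = {q, q'} → q ∪ q' = T :=
    fun T hT q q' hne h => union_eq_of_mem_powersetCard_two (hF₁ T hT)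
      (mem_of_mem_erase (show q ∈ Ψ T by simp [h])) (mem_of_mem_erase (show q' ∈ Ψ T by simp [h]))
      hne
  have hinj : Set.InjOn Ψ F₁ := fun T hT T' hT' h => by
    obtain ⟨q, q', hne, hTq⟩ := card_eq_two.mp (mem_powersetCard.mp (hΨ T hT)).2
    rw [← hunion T hT q q' hne hTq, hunion T' hT' q q' hne (h ▸ hTq)]
  have hle := card_le_card_of_injOn Ψ hΨ hinj
  rw [card_powersetCard] at hle
  refine ⟨hle, fun heq q hq q' hq' => ?_⟩
  obtain rfl | hne := eq_or_ne q q'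
  · rw [disjoint_self_iff_empty, ← ne_eq, ← nonempty_iff_ne_empty, ← card_pos, hU₂ q hq]
    norm_num
  have himage : F₁.image Ψ = U.powersetCard 2 := eq_of_subset_of_card_le
    (image_subset_iff.mpr hΨ) (by rw [card_image_of_injOn hinj, card_powersetCard, heq])
  have hpair : {q, q'} ∈ F₁.image Ψ := by
    rw [himage, mem_powersetCard, card_pair hne]
    exact ⟨insert_subset hq (singleton_subset_iff.mpr hq'), rfl⟩
  obtain ⟨T, hT, hTq⟩ := mem_image.mp hpair
  intro hdisj
  have := card_union_of_disjoint hdisj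
  rw [hunion T hT q q' hne hTq, hF₁ T hT, hU₂ q hq, hU₂ q' hq'] at this
  omega

theorem exists_forall_mem_of_intersecting {U : Finset (Finset V)}
    (hU₂ : ∀ q ∈ U, q.card = 2) (hU : (U : Set (Finset V)).Intersecting) (hU₄ : 3 < U.card) :
    ∃ x, ∀ q ∈ U, x ∈ q := by
  obtain ⟨q₁, hq₁⟩ := card_pos.mp (by omega : 0 < U.card)
  obtain ⟨a, b, hab, rfl⟩ := card_eq_two.mp (hU₂ _ hq₁)
  by_contra! h
  obtain ⟨q₂, hq₂, ha₂⟩ := h a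
  obtain ⟨q₃, hq₃, hb₃⟩ := h b
  obtain ⟨c, d, hcd, rfl⟩ := card_eq_two.mp (hU₂ _ hq₂)
  obtain ⟨e, f, -, rfl⟩ := card_eq_two.mp (hU₂ _ hq₃)
  have hsub : U ⊆ ({a, b} ∪ {c, d} : Finset V).powersetCard 2 := by
    intro q hq
    obtain ⟨u, v, huv, rfl⟩ := card_eq_two.mp (hU₂ _ hq)
    have := And.intro (hU hq₁ hq₂) <| And.intro (hU hq₁ hq₃) <| And.intro (hU hq₂ hq₃) <|
      And.intro (hU hq hq₁) <| And.intro (hU hq hq₂) (hU hq hq₃)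
    simp only [disjoint_insert_left, disjoint_insert_right, disjoint_singleton, mem_insert,
      mem_singleton] at this ha₂ hb₃
    simp only [mem_powersetCard, card_pair huv, insert_subset_iff, mem_union, mem_insert,
      mem_singleton, singleton_subset_iff]
    grind
  have hinter : 0 < (({a, b} : Finset V) ∩ {c, d}).card :=
    card_pos.mpr (not_disjoint_iff_nonempty_inter.mp (hU hq₁ hq₂))
  have hunion := card_union_add_card_inter ({a, b} : Finset V) {c, d}
  rw [card_pair hab, card_pair hcd] at hunion
  have : U.card ≤ 3 := calc
    U.card ≤ (({a, b} ∪ {c, d} : Finset V).card).choose 2 := by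
      simpa using card_le_card hsub
    _ ≤ (3 : ℕ).choose 2 := Nat.choose_le_choose 2 (by omega)
    _ = 3 := rfl
  omega

theorem card_biUnion_powersetCard {B : Finset (Finset V)} {m r : ℕ}
    (hB : ∀ Q ∈ B, Q.card = m) (hBr : ∀ Q ∈ B, ∀ Q' ∈ B, r ≤ (Q ∩ Q').card → Q = Q') :
    (B.biUnion (powersetCard r)).card = B.card * m.choose r := by
  rw [card_biUnion fun Q hQ Q' hQ' hne => disjoint_left.mpr fun s hs hs' => hne <| by
      rw [mem_powersetCard] at hs hs'
      exact hBr Q hQ Q' hQ' (hs.2 ▸ card_le_card (subset_inter hs.1 hs'.1)),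
    sum_congr rfl fun Q hQ => by rw [card_powersetCard, hB Q hQ], sum_const, smul_eq_mul]

theorem not_containsConfig_of_forall_exists_notMem {m : ℕ} {F : Finset (Finset V)}
    {pattern : List (Finset (Fin m))} {x : V} (hF : ∀ t ∈ F, x ∈ t) (hne : pattern ≠ [])
    (hpattern : ∀ i, ∃ t ∈ pattern, i ∉ t) : ¬ containsConfig F pattern := by
  rintro ⟨f, hf, hmem⟩
  obtain ⟨t₀, ht₀⟩ := List.exists_mem_of_ne_nil pattern hne
  obtain ⟨i, -, hi⟩ := mem_image.mp (hF _ (hmem t₀ ht₀))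
  obtain ⟨t, ht, hit⟩ := hpattern i
  obtain ⟨j, hj, hji⟩ := mem_image.mp (hF _ (hmem t ht))
  exact hit (hf (hji.trans hi.symm) ▸ hj)

theorem add_four_mul_le_choose_two {m z f k : ℕ} (hm : 4 ≤ m)
    (hpairs : z + f + 6 * k = (m + 1).choose 2) (hf : f ≤ z.choose 2) :
    f + 4 * k ≤ m.choose 2 ∧ (f + 4 * k = m.choose 2 → k = 0 ∧ z = m) := by
  have c₁ : ((m + 1).choose 2 : ℚ) = (m + 1) * m / 2 := by
    rw [Nat.cast_choose_two]; push_cast; ring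
  have c₂ : (m.choose 2 : ℚ) = m * (m - 1) / 2 := Nat.cast_choose_two ℚ m
  have c₃ : (z.choose 2 : ℚ) = z * (z - 1) / 2 := Nat.cast_choose_two ℚ z
  have hpq : (z : ℚ) + f + 6 * k = (m + 1) * m / 2 := by rw [← c₁]; exact_mod_cast hpairs
  have hfq : (f : ℚ) ≤ z * (z - 1) / 2 := by rw [← c₃]; exact_mod_cast hf
  have hzk : m ≤ z + 2 * k := by
    by_contra! h
    have h' : (z : ℚ) + 2 * k + 1 ≤ m := by exact_mod_cast h
    have hm' : (4 : ℚ) ≤ m := by exact_mod_cast hm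
    have := mul_le_mul h' h' (by positivity) (by positivity)
    obtain rfl | rfl | hk : k = 0 ∨ k = 1 ∨ 2 ≤ k := by omega
    · push_cast at *; nlinarith
    · push_cast at *; nlinarith
    · have : (2 : ℚ) ≤ k := by exact_mod_cast hk
      nlinarith
  have hzk' : (m : ℚ) ≤ z + 2 * k := by exact_mod_cast hzk
  refine ⟨by rw [← Nat.cast_le (α := ℚ)]; push_cast; linarith, fun heq => ?_⟩
  have heq' : (f : ℚ) + 4 * k = m * (m - 1) / 2 := by rw [← c₂]; exact_mod_cast heq
  have hzm : z + 2 * k = m := by exact_mod_cast (by linarith : (z : ℚ) + 2 * k = m)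
  have hk : k = 0 := by
    by_contra hk
    have hk1 : (1 : ℚ) ≤ k := by exact_mod_cast Nat.one_le_iff_ne_zero.mpr hk
    have : (2 * z + 2 * k : ℚ) ≤ 5 := by nlinarith
    have : 2 * z + 2 * k ≤ 5 := by exact_mod_cast this
    obtain ⟨rfl, rfl, rfl⟩ : k = 2 ∧ z = 0 ∧ m = 4 := by omega
    simp [Nat.choose] at hpairs
  exact ⟨hk, by omega⟩

variable {F : Finset (Finset V)}

theorem containsConfig_configAp {p q r x y z : V} (hpq : p ≠ q) (hpr : p ≠ r) (hqr : q ≠ r)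
    (hx : x ∉ ({p, q, r} : Finset V)) (hy : y ∉ ({p, q, r} : Finset V))
    (hz : z ∉ ({p, q, r} : Finset V)) (hxy : x ≠ y) (hxz : x ≠ z) (hyz : y ≠ z)
    (h₁ : {p, q, r} ∈ F) (h₂ : {p, q, x} ∈ F) (h₃ : {p, r, y} ∈ F) (h₄ : {q, r, z} ∈ F) :
    containsConfig F configAp := by
  simp only [mem_insert, mem_singleton, not_or] at hx hy hz
  refine ⟨![p, q, r, x, y, z], fun i j h => ?_, fun t ht => ?_⟩
  · fin_cases i <;> fin_cases j <;> simp_all [eq_comm]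
  · simp only [configAp, List.mem_cons, List.not_mem_nil, or_false] at ht
    rcases ht with rfl | rfl | rfl | rfl <;> simpa

theorem containsConfig_configBp {p q r d e : V} (hpq : p ≠ q) (hpr : p ≠ r) (hqr : q ≠ r)
    (hd : d ∉ ({p, q, r} : Finset V)) (he : e ∉ ({p, q, r} : Finset V)) (hde : d ≠ e)
    (h₁ : {p, q, r} ∈ F) (h₂ : {p, q, e} ∈ F) (h₃ : {p, r, d} ∈ F) (h₄ : {q, r, d} ∈ F) :
    containsConfig F configBp := by
  simp only [mem_insert, mem_singleton, not_or] at hd he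
  refine ⟨![p, q, r, d, e], fun i j h => ?_, fun t ht => ?_⟩
  · fin_cases i <;> fin_cases j <;> simp_all [eq_comm]
  · simp only [configBp, List.mem_cons, List.not_mem_nil, or_false] at ht
    rcases ht with rfl | rfl | rfl | rfl <;> simpa

theorem eq_of_extend_pairs (hA : ¬ containsConfig F configAp)
    (hB : ¬ containsConfig F configBp) {a b c x y z : V} (hab : a ≠ b) (hac : a ≠ c)
    (hbc : b ≠ c) (hx : x ∉ ({a, b, c} : Finset V)) (hy : y ∉ ({a, b, c} : Finset V))
    (hz : z ∉ ({a, b, c} : Finset V)) (hT : {a, b, c} ∈ F) (hTx : {a, b, x} ∈ F)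
    (hTy : {a, c, y} ∈ F) (hTz : {b, c, z} ∈ F) : x = y := by
  by_contra hxy
  by_cases hzx : z = x
  · subst hzx
    exact hB (containsConfig_configBp hac hab hbc.symm (by rwa [pair_comm]) (by rwa [pair_comm])
      hxy (by rwa [pair_comm]) hTy hTx (by rwa [insert_comm]))
  by_cases hzy : z = y
  · subst hzy
    exact hB (containsConfig_configBp hab hac hbc hy hx (Ne.symm hxy) hT hTx hTy hTz)
  exact hA (containsConfig_configAp hab hac hbc hx hy hz hxy (Ne.symm hzx) (Ne.symm hzy)
    hT hTx hTy hTz)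

variable [Fintype V]

def link (F : Finset (Finset V)) (p : Finset V) : Finset V :=
  univ.filter fun v => v ∉ p ∧ insert v p ∈ F

theorem mem_link {p : Finset V} {v : V} : v ∈ link F p ↔ v ∉ p ∧ insert v p ∈ F := by
  simp [link]

theorem mem_link_pair {a b v : V} : v ∈ link F {a, b} ↔ v ≠ a ∧ v ≠ b ∧ {a, b, v} ∈ F := by
  rw [mem_link, insert_comm, pair_comm v b]
  simp [and_assoc]

theorem link_pair_eq (hA : ¬ containsConfig F configAp) (hB : ¬ containsConfig F configBp)
    {a b c d : V} (hab : a ≠ b) (hac : a ≠ c) (had : a ≠ d) (hbc : b ≠ c) (hbd : b ≠ d)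
    (hcd : c ≠ d) (habc : {a, b, c} ∈ F) (habd : {a, b, d} ∈ F) (hacd : {a, c, d} ∈ F)
    (hbcd : {b, c, d} ∈ F) : link F {a, b} = {c, d} := by
  ext v
  rw [mem_link_pair, mem_insert, mem_singleton]
  constructor
  · rintro ⟨hva, hvb, habv⟩
    by_contra! hv
    have hd : d ∉ ({a, b, c} : Finset V) := by simp [had.symm, hbd.symm, hcd.symm]
    exact hv.2 (eq_of_extend_pairs hA hB hab hac hbc (by simp [hva, hvb, hv.1]) hd hd
      habc habv hacd hbcd)
  · rintro (rfl | rfl)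
    exacts [⟨hac.symm, hbc.symm, habc⟩, ⟨had.symm, hbd.symm, habd⟩]

theorem card_link_eq_one {p : Finset V} {c : V} (hc : c ∈ link F p) (h : link F p ⊆ {c}) :
    (link F p).card = 1 := by
  rw [(subset_singleton_iff.mp h).resolve_left (ne_empty_of_mem hc), card_singleton]

def IsBlock (F : Finset (Finset V)) (Q : Finset V) : Prop :=
  Q.card = 4 ∧ ∀ p ⊆ Q, p.card = 2 → link F p = Q \ p

theorem isBlock_of_forall_triple_mem (hA : ¬ containsConfig F configAp)
    (hB : ¬ containsConfig F configBp) {Q : Finset V} (hQ : Q.card = 4)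
    (hK : ∀ T ⊆ Q, T.card = 3 → T ∈ F) : IsBlock F Q := by
  refine ⟨hQ, fun p hpQ hp => ?_⟩
  obtain ⟨a, b, hab, rfl⟩ := card_eq_two.mp hp
  obtain ⟨c, d, hcd, hQp⟩ := card_eq_two.mp (by rw [card_sdiff_of_subset hpQ, hQ, hp] :
    (Q \ {a, b}).card = 2)
  have hc : c ∈ Q \ {a, b} := by simp [hQp]
  have hd : d ∈ Q \ {a, b} := by simp [hQp]
  simp only [mem_sdiff, mem_insert, mem_singleton, not_or, eq_comm (a := c),
    eq_comm (a := d)] at hc hd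
  obtain ⟨⟨hcQ, hac, hbc⟩, ⟨hdQ, had, hbd⟩⟩ := And.intro hc hd
  have ha : a ∈ Q := hpQ (by simp)
  have hb : b ∈ Q := hpQ (by simp)
  have mem {u v w : V} (hu : u ∈ Q) (hv : v ∈ Q) (hw : w ∈ Q) (huv : u ≠ v) (huw : u ≠ w)
      (hvw : v ≠ w) : {u, v, w} ∈ F :=
    hK _ (by simp [insert_subset_iff, *]) (card_eq_three.mpr ⟨u, v, w, huv, huw, hvw, rfl⟩)
  rw [hQp, link_pair_eq hA hB hab hac had hbc hbd hcd (mem ha hb hcQ hab hac hbc)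
    (mem ha hb hdQ hab had hbd) (mem ha hcQ hdQ hac had hcd) (mem hb hcQ hdQ hbc hbd hcd)]

theorem mem_of_subset_insert_of_mem_link {S T : Finset V} {x : V} (hS : S ∈ F)
    (hS3 : S.card = 3) (hlink : ∀ w ∈ S, x ∈ link F (S.erase w)) (hTS : T ⊆ insert x S)
    (hT3 : T.card = 3) : T ∈ F := by
  by_cases hxT : x ∈ T
  · obtain ⟨w, hw, hwS⟩ := exists_eq_insert_iff.mpr
      ⟨subset_insert_iff.mp hTS, by rw [card_erase_of_mem hxT, hT3, hS3]⟩
    have := (mem_link.mp (hlink w (hwS ▸ mem_insert_self w _))).2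
    rwa [← hwS, erase_insert hw, insert_erase hxT] at this
  · rwa [eq_of_subset_of_card_le ((subset_insert_iff_of_notMem hxT).mp hTS) (by rw [hS3, hT3])]

theorem exists_card_link_eq_one_or_isBlock (hF : isTripleSystem F)
    (hA : ¬ containsConfig F configAp) (hB : ¬ containsConfig F configBp) {T : Finset V}
    (hT : T ∈ F) : (∃ p ⊆ T, p.card = 2 ∧ (link F p).card = 1) ∨ ∃ Q, IsBlock F Q ∧ T ⊆ Q := by
  obtain ⟨a, b, c, hab, hac, hbc, rfl⟩ := card_eq_three.mp (hF _ hT)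
  have hTb : {a, c, b} ∈ F := by rwa [pair_comm]
  have hTa : {b, c, a} ∈ F := by rwa [pair_comm c a, insert_comm]
  by_cases h₁ : link F {a, b} ⊆ {c}
  · exact .inl ⟨{a, b}, by simp, card_pair hab,
      card_link_eq_one (mem_link_pair.mpr ⟨hac.symm, hbc.symm, hT⟩) h₁⟩
  by_cases h₂ : link F {a, c} ⊆ {b}
  · exact .inl ⟨{a, c}, by simp, card_pair hac,
      card_link_eq_one (mem_link_pair.mpr ⟨hab.symm, hbc, hTb⟩) h₂⟩
  by_cases h₃ : link F {b, c} ⊆ {a}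
  · exact .inl ⟨{b, c}, by simp, card_pair hbc,
      card_link_eq_one (mem_link_pair.mpr ⟨hab, hac, hTa⟩) h₃⟩
  obtain ⟨x, hx, hxc⟩ := not_subset.mp h₁
  obtain ⟨y, hy, hyb⟩ := not_subset.mp h₂
  obtain ⟨z, hz, hza⟩ := not_subset.mp h₃
  obtain ⟨⟨hxa, hxb, hTx⟩, ⟨hya, hyc, hTy⟩, ⟨hzb, hzc, hTz⟩⟩ :=
    And.intro (mem_link_pair.mp hx) (And.intro (mem_link_pair.mp hy) (mem_link_pair.mp hz))
  have hxT : x ∉ ({a, b, c} : Finset V) := by simp_all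
  have hyT : y ∉ ({a, b, c} : Finset V) := by simp_all
  have hzT : z ∉ ({a, b, c} : Finset V) := by simp_all
  have hxy : x = y := eq_of_extend_pairs hA hB hab hac hbc hxT hyT hzT hT hTx hTy hTz
  have hxz : x = z := eq_of_extend_pairs hA hB hab.symm hbc hac (by rwa [insert_comm])
    (by rwa [insert_comm]) (by rwa [insert_comm]) (by rwa [insert_comm]) (by rwa [insert_comm])
    hTz hTy
  subst hxy hxz
  have h3 : ({a, b, c} : Finset V).card = 3 := card_eq_three.mpr ⟨a, b, c, hab, hac, hbc, rfl⟩
  have hlink : ∀ w ∈ ({a, b, c} : Finset V), x ∈ link F (({a, b, c} : Finset V).erase w) := by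
    simp [erase_insert_of_ne, hab, hac, hbc, hx, hy, hz]
  exact .inr ⟨insert x {a, b, c}, isBlock_of_forall_triple_mem hA hB
    (by rw [card_insert_of_notMem hxT, h3]) fun T hTS hT3 =>
      mem_of_subset_insert_of_mem_link hT h3 hlink hTS hT3, subset_insert _ _⟩

theorem exists_mem_link_insert_eq {T p : Finset V} (hT : T ∈ F) (hT3 : T.card = 3)
    (hpT : p ⊆ T) (hp : p.card = 2) : ∃ t ∈ link F p, insert t p = T := by
  obtain ⟨t, htp, rfl⟩ := exists_eq_insert_iff.mpr ⟨hpT, by rw [hp, hT3]⟩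
  exact ⟨t, mem_link.mpr ⟨htp, hT⟩, rfl⟩

theorem eq_of_card_link_eq_one (hF : isTripleSystem F) {p T T' : Finset V} (hp : p.card = 2)
    (hlink : (link F p).card = 1) (hT : T ∈ F) (hT' : T' ∈ F) (hpT : p ⊆ T) (hpT' : p ⊆ T') :
    T = T' := by
  obtain ⟨v, hv⟩ := card_eq_one.mp hlink
  obtain ⟨t, ht, rfl⟩ := exists_mem_link_insert_eq hT (hF T hT) hpT hp
  obtain ⟨t', ht', rfl⟩ := exists_mem_link_insert_eq hT' (hF T' hT') hpT' hp
  rw [hv, mem_singleton] at ht ht'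
  rw [ht, ht']

namespace IsBlock

variable {Q : Finset V}

theorem subset_of_mem (hQ : IsBlock F Q) (hF : isTripleSystem F) {p T : Finset V}
    (hpQ : p ⊆ Q) (hp : p.card = 2) (hT : T ∈ F) (hpT : p ⊆ T) : T ⊆ Q := by
  obtain ⟨t, ht, rfl⟩ := exists_mem_link_insert_eq hT (hF T hT) hpT hp
  rw [hQ.2 p hpQ hp, mem_sdiff] at ht
  exact insert_subset ht.1 hpQ

theorem mem (hQ : IsBlock F Q) {T : Finset V} (hTQ : T ⊆ Q) (hT : T.card = 3) : T ∈ F := by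
  obtain ⟨p, hpT, hp⟩ := exists_subset_card_eq (show 2 ≤ T.card by omega)
  obtain ⟨t, htp, rfl⟩ := exists_eq_insert_iff.mpr ⟨hpT, by rw [hp, hT]⟩
  have ht : t ∈ link F p := by
    rw [hQ.2 p (hpT.trans hTQ) hp, mem_sdiff]
    exact ⟨hTQ (mem_insert_self t p), htp⟩
  exact (mem_link.mp ht).2

theorem eq_of_two_le_card_inter (hQ : IsBlock F Q) {Q' : Finset V} (hQ' : IsBlock F Q')
    (h : 2 ≤ (Q ∩ Q').card) : Q = Q' := by
  obtain ⟨p, hp, hp2⟩ := exists_subset_card_eq h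
  have hpQ := hp.trans inter_subset_left
  have hpQ' := hp.trans inter_subset_right
  rw [← sdiff_union_of_subset hpQ, ← sdiff_union_of_subset hpQ', ← hQ.2 p hpQ hp2,
    ← hQ'.2 p hpQ' hp2]

end IsBlock

open Classical in
noncomputable def blocks (F : Finset (Finset V)) : Finset (Finset V) :=
  univ.filter (IsBlock F)

theorem mem_blocks {Q : Finset V} : Q ∈ blocks F ↔ IsBlock F Q := by
  simp [blocks]

theorem card_biUnion_blocks_powersetCard {r : ℕ} (hr : 2 ≤ r) :
    ((blocks F).biUnion (powersetCard r)).card = (blocks F).card * (4 : ℕ).choose r :=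
  card_biUnion_powersetCard (fun _ hQ => (mem_blocks.mp hQ).1) fun _ hQ _ hQ' h =>
    (mem_blocks.mp hQ).eq_of_two_le_card_inter (mem_blocks.mp hQ') (hr.trans h)

theorem biUnion_blocks_powersetCard_three_subset :
    (blocks F).biUnion (powersetCard 3) ⊆ F := fun T hT => by
  obtain ⟨Q, hQ, hTQ⟩ := mem_biUnion.mp hT
  exact (mem_blocks.mp hQ).mem (mem_powersetCard.mp hTQ).1 (mem_powersetCard.mp hTQ).2

theorem not_subset_of_mem_sdiff_blocks (hF : isTripleSystem F) {T Q : Finset V}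
    (hT : T ∈ F \ (blocks F).biUnion (powersetCard 3)) (hQ : IsBlock F Q) : ¬ T ⊆ Q :=
  fun hTQ => (mem_sdiff.mp hT).2 <| mem_biUnion.mpr
    ⟨Q, mem_blocks.mpr hQ, mem_powersetCard.mpr ⟨hTQ, hF T (mem_sdiff.mp hT).1⟩⟩

theorem notMem_biUnion_blocks_powersetCard_two (hF : isTripleSystem F) {T q : Finset V}
    (hT : T ∈ F \ (blocks F).biUnion (powersetCard 3)) (hq : q ∈ T.powersetCard 2) :
    q ∉ (blocks F).biUnion (powersetCard 2) := fun hqB => by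
  obtain ⟨Q, hQ, hqQ⟩ := mem_biUnion.mp hqB
  rw [mem_powersetCard] at hq hqQ
  exact not_subset_of_mem_sdiff_blocks hF hT (mem_blocks.mp hQ)
    ((mem_blocks.mp hQ).subset_of_mem hF hqQ.1 hqQ.2 (mem_sdiff.mp hT).1 hq.1)

/-- Here `F₁` is the set of triples outside the `k` blocks, `φ T` is a pair of `T` lying in no
other triple, and `U` is the set of pairs neither of this form nor inside a block. -/
theorem exists_pair_decomposition (hF : isTripleSystem F) (hA : ¬ containsConfig F configAp)
    (hB : ¬ containsConfig F configBp) :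
    ∃ (F₁ U : Finset (Finset V)) (k : ℕ) (φ : Finset V → Finset V), F₁ ⊆ F ∧
      F.card = F₁.card + 4 * k ∧ U.card + F₁.card + 6 * k = (Fintype.card V).choose 2 ∧
      (∀ q ∈ U, q.card = 2) ∧
      ∀ T ∈ F₁, φ T ∈ T.powersetCard 2 ∧ (T.powersetCard 2).erase (φ T) ⊆ U := by
  set F₁ := F \ (blocks F).biUnion (powersetCard 3)
  set P := (blocks F).biUnion (powersetCard 2)
  have hprivate : ∀ T, ∃ p, T ∈ F₁ → p ∈ T.powersetCard 2 ∧ (link F p).card = 1 := fun T => by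
    by_cases hT : T ∈ F₁
    · obtain ⟨p, hpT, hp, hlink⟩ := (exists_card_link_eq_one_or_isBlock hF hA hB
        (mem_sdiff.mp hT).1).resolve_right fun ⟨Q, hQ, hTQ⟩ =>
          not_subset_of_mem_sdiff_blocks hF hT hQ hTQ
      exact ⟨p, fun _ => ⟨mem_powersetCard.mpr ⟨hpT, hp⟩, hlink⟩⟩
    · exact ⟨∅, fun h => absurd h hT⟩
  choose φ hφ using hprivate
  have hφ_eq : ∀ T ∈ F₁, ∀ T' ∈ F₁, φ T' ⊆ T → T' = T := fun T hT T' hT' h =>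
    eq_of_card_link_eq_one hF (mem_powersetCard.mp (hφ T' hT').1).2 (hφ T' hT').2
      (mem_sdiff.mp hT').1 (mem_sdiff.mp hT).1 (mem_powersetCard.mp (hφ T' hT').1).1 h
  have hinj : Set.InjOn φ F₁ := fun T hT T' hT' h =>
    hφ_eq T' hT' T hT (by rw [h]; exact (mem_powersetCard.mp (hφ T' hT').1).1)
  have hdisj : Disjoint (F₁.image φ) P := disjoint_left.mpr fun q hq => by
    obtain ⟨T, hT, rfl⟩ := mem_image.mp hq
    exact notMem_biUnion_blocks_powersetCard_two hF hT (hφ T hT).1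
  have hsub : F₁.image φ ∪ P ⊆ univ.powersetCard 2 :=
    union_subset (image_subset_iff.mpr fun T hT => powersetCard_mono (subset_univ T) (hφ T hT).1)
      (biUnion_subset.mpr fun Q _ => powersetCard_mono (subset_univ Q))
  set U := univ.powersetCard 2 \ (F₁.image φ ∪ P)
  refine ⟨F₁, U, (blocks F).card, φ, sdiff_subset, ?_, ?_, fun q hq => ?_,
    fun T hT => ⟨(hφ T hT).1, fun q hq => ?_⟩⟩
  · rw [← card_sdiff_add_card_eq_card biUnion_blocks_powersetCard_three_subset,
      card_biUnion_blocks_powersetCard (by norm_num), mul_comm]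
    rfl
  · have hU : U.card = _ := card_sdiff_of_subset hsub
    have hle := card_le_card hsub
    rw [card_union_of_disjoint hdisj, card_image_of_injOn hinj,
      card_biUnion_blocks_powersetCard le_rfl, show (4 : ℕ).choose 2 = 6 from rfl,
      card_powersetCard, card_univ] at hU hle
    omega
  · exact (mem_powersetCard.mp (mem_sdiff.mp hq).1).2
  · obtain ⟨hqφ, hqT⟩ := mem_erase.mp hq
    refine mem_sdiff.mpr ⟨powersetCard_mono (subset_univ T) hqT, ?_⟩
    rw [mem_union]
    rintro (h | h)
    · obtain ⟨T', hT', rfl⟩ := mem_image.mp h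
      exact hqφ (by rw [hφ_eq T hT T' hT' (mem_powersetCard.mp hqT).1])
    · exact notMem_biUnion_blocks_powersetCard_two hF hT hqT h

def fullStar (x : V) : Finset (Finset V) :=
  univ.filter fun t => t.card = 3 ∧ x ∈ t

theorem card_fullStar (x : V) : (fullStar x).card = (Fintype.card V - 1).choose 2 := by
  rw [← card_univ, ← card_erase_of_mem (mem_univ x), ← card_powersetCard]
  have hx {t : Finset V} (ht : t ∈ (univ.erase x).powersetCard 2) : x ∉ t := fun h =>
    (mem_erase.mp ((mem_powersetCard.mp ht).1 h)).1 rfl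
  refine card_nbij' (·.erase x) (insert x) (fun t ht => ?_) (fun t ht => ?_)
    (fun t ht => insert_erase (mem_filter.mp ht).2.2) (fun t ht => erase_insert (hx ht))
  · simp_all [fullStar, erase_subset_erase]
  · simp [fullStar, card_insert_of_notMem (hx ht), (mem_powersetCard.mp ht).2]

theorem isTripleSystem_fullStar (x : V) : isTripleSystem (fullStar x) :=
  fun _ ht => (mem_filter.mp ht).2.1

theorem not_containsConfig_fullStar_configAp (x : V) : ¬ containsConfig (fullStar x) configAp :=
  not_containsConfig_of_forall_exists_notMem (fun _ ht => (mem_filter.mp ht).2.2)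
    (by simp [configAp]) (by decide)

theorem not_containsConfig_fullStar_configBp (x : V) : ¬ containsConfig (fullStar x) configBp :=
  not_containsConfig_of_forall_exists_notMem (fun _ ht => (mem_filter.mp ht).2.2)
    (by simp [configBp]) (by decide)

theorem card_le_choose_two_and_eq_fullStar (hn : 5 ≤ Fintype.card V)
    (hF : isTripleSystem F) (hA : ¬ containsConfig F configAp)
    (hB : ¬ containsConfig F configBp) :
    F.card ≤ (Fintype.card V - 1).choose 2 ∧
      (F.card = (Fintype.card V - 1).choose 2 → ∃ x, F = fullStar x) := by
  obtain ⟨F₁, U, k, φ, hF₁F, hFcard, hpairs, hU₂, hφ⟩ := exists_pair_decomposition hF hA hB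
  obtain ⟨hle, hint⟩ := card_le_choose_two_of_erase_subset (fun T hT => hF T (hF₁F hT))
    (fun T hT => (hφ T hT).1) (fun T hT => (hφ T hT).2) hU₂
  obtain ⟨m, hm⟩ : ∃ m, Fintype.card V = m + 1 := ⟨_, (Nat.succ_pred_eq_of_pos (by omega)).symm⟩
  rw [hm] at hpairs ⊢
  rw [Nat.add_sub_cancel]
  obtain ⟨hbound, hextremal⟩ := add_four_mul_le_choose_two (by omega) hpairs hle
  refine ⟨hFcard ▸ hbound, fun hFeq => ?_⟩
  obtain ⟨rfl, hUm⟩ := hextremal (by omega)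
  have hF₁ : F₁ = F := eq_of_subset_of_card_le hF₁F (by omega)
  obtain ⟨x, hx⟩ := exists_forall_mem_of_intersecting hU₂ (hint (by rw [hUm]; omega)) (by omega)
  refine ⟨x, eq_of_subset_of_card_le (fun T hT => ?_) (by rw [card_fullStar, hm, hFeq]; rfl)⟩
  rw [← hF₁] at hT
  obtain ⟨q, hq⟩ := card_pos.mp (by
    rw [card_erase_of_mem (hφ T hT).1, card_powersetCard, hF T (hF₁F hT)]; decide :
    0 < ((T.powersetCard 2).erase (φ T)).card)
  exact mem_filter.mpr ⟨mem_univ T, hF T (hF₁F hT),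
    (mem_powersetCard.mp (mem_of_mem_erase hq)).1 (hx q ((hφ T hT).2 hq))⟩

/-- ex(n, A+B+) = C(n-1,2) for n >= 5, and the only extremal family is the full star. -/
theorem ex_ApBp (n : ℕ) (hn : 5 ≤ n) :
    IsGreatest {k : ℕ | ∃ F : Finset (Finset (Fin n)), isTripleSystem F ∧
        ¬ containsConfig F configAp ∧ ¬ containsConfig F configBp ∧ F.card = k}
      ((n - 1).choose 2) ∧
    ∀ F : Finset (Finset (Fin n)), isTripleSystem F →
      ¬ containsConfig F configAp → ¬ containsConfig F configBp →
      F.card = (n - 1).choose 2 →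
      ∃ x : Fin n, F = Finset.univ.filter (fun t => t.card = 3 ∧ x ∈ t) := by
  have hcard : 5 ≤ Fintype.card (Fin n) := by rwa [Fintype.card_fin]
  refine ⟨⟨⟨fullStar ⟨0, by omega⟩, isTripleSystem_fullStar _,
    not_containsConfig_fullStar_configAp _, not_containsConfig_fullStar_configBp _, ?_⟩, ?_⟩,
    fun F hF hA hB hFcard => ?_⟩
  · rw [card_fullStar, Fintype.card_fin]
  · rintro _ ⟨F, hF, hA, hB, rfl⟩
    simpa using (card_le_choose_two_and_eq_fullStar hcard hF hA hB).1
  · exact (card_le_choose_two_and_eq_fullStar hcard hF hA hB).2 (by simpa using hFcard)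
end

section
/- A triple system F on a finite vertex set V is D-free if and only if for every vertex x ∈ V, every connected component of the link graph F[x] is either a triangle or a star (where a star includes the degenerate cases of a single vertex or a single edge). -/
/-- The link of a vertex x in F: the graph whose edges are the pairs forming a triple
of F together with x. -/
def linkGraph {V : Type*} [DecidableEq V] (F : Finset (Finset V)) (x : V) :
    SimpleGraph V where
  Adj y z := y ≠ z ∧ y ≠ x ∧ z ≠ x ∧ ({x, y, z} : Finset V) ∈ F
  symm := by
    constructor
    rintro y z ⟨h1, h2, h3, h4⟩
    exact ⟨h1.symm, h3, h2, by rwa [Finset.pair_comm z y]⟩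
  loopless := by
    constructor
    rintro y ⟨h1, -⟩
    exact h1 rfl

/-- A connected component is a triangle: its support consists of three pairwise
adjacent vertices. -/
def isTriangleComponent {V : Type*} (G : SimpleGraph V) (c : G.ConnectedComponent) : Prop :=
  ∃ a b d : V, a ≠ b ∧ a ≠ d ∧ b ≠ d ∧ c.supp = {a, b, d} ∧
    G.Adj a b ∧ G.Adj a d ∧ G.Adj b d

/-- A connected component is a star: some vertex of the component belongs to every edge of
the component (this includes the degenerate cases of a single vertex or a single edge). -/
def isStarComponent {V : Type*} (G : SimpleGraph V) (c : G.ConnectedComponent) : Prop :=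
  ∃ v ∈ c.supp, ∀ y z : V, y ∈ c.supp → G.Adj y z → (y = v ∨ z = v)

/-!
A copy of configuration D is the same thing as a vertex `x` (the image of `3`) together with a
path on four distinct vertices in the link of `x`: the three triples through `x` give the edges
`4 – 1 – 2 – 5`. It remains to see that a graph has no such path exactly when each of its
components is a triangle or a star. In a component without a triangle, a vertex of
degree at least two must be a centre: any edge missing it would extend a two-edge path through it
to a four-vertex path. A triangle can have no further edge at all for the same reason.
-/

namespace SimpleGraph

variable {V : Type*} {G : SimpleGraph V}

/-- A (not necessarily induced) path `p – q – r – s` on four distinct vertices; the other three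
inequalities are implied by adjacency. -/
def HasPathFour (G : SimpleGraph V) : Prop :=
  ∃ p q r s : V, p ≠ r ∧ p ≠ s ∧ q ≠ s ∧ G.Adj p q ∧ G.Adj q r ∧ G.Adj r s

lemma ConnectedComponent.supp_subset_of_adj_closed {c : G.ConnectedComponent} {S : Set V} {a : V}
    (ha : a ∈ c.supp) (haS : a ∈ S) (hS : ∀ y ∈ S, ∀ z, G.Adj y z → z ∈ S) : c.supp ⊆ S := by
  intro y hy
  have hreach := (reachable_iff_reflTransGen a y).1 (c.reachable_of_mem_supp ha hy)
  clear hy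
  induction hreach with
  | refl => exact haS
  | tail _ hyz ih => exact hS _ ih _ hyz

lemma eq_or_eq_of_adj_of_triangle (hP : ¬ G.HasPathFour) {a b d z : V} (hab : G.Adj a b)
    (had : G.Adj a d) (hbd : G.Adj b d) (haz : G.Adj a z) : z = b ∨ z = d := by
  by_contra! h
  exact hP ⟨z, a, b, d, h.1, h.2, had.ne, haz.symm, hab, hbd⟩

lemma isTriangleComponent_of_triangle (hP : ¬ G.HasPathFour) {c : G.ConnectedComponent}
    {a b d : V} (ha : a ∈ c.supp) (hab : G.Adj a b) (had : G.Adj a d) (hbd : G.Adj b d) :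
    isTriangleComponent G c := by
  refine ⟨a, b, d, hab.ne, had.ne, hbd.ne, ?_, hab, had, hbd⟩
  have hclosed : ∀ y ∈ ({a, b, d} : Set V), ∀ z, G.Adj y z → z ∈ ({a, b, d} : Set V) := by
    rintro y (rfl | rfl | rfl) z hz
    · rcases eq_or_eq_of_adj_of_triangle hP hab had hbd hz with rfl | rfl <;> simp
    · rcases eq_or_eq_of_adj_of_triangle hP hab.symm hbd had hz with rfl | rfl <;> simp
    · rcases eq_or_eq_of_adj_of_triangle hP had.symm hbd.symm hab hz with rfl | rfl <;> simp
  refine (c.supp_subset_of_adj_closed ha (by simp) hclosed).antisymm ?_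
  rintro y (rfl | rfl | rfl)
  · exact ha
  · exact c.mem_supp_of_adj_mem_supp ha hab
  · exact c.mem_supp_of_adj_mem_supp ha had

lemma isStarComponent_of_forall_adj_adj {c : G.ConnectedComponent} {a : V} (ha : a ∈ c.supp)
    (h : ∀ y z, G.Adj a y → G.Adj y z → z = a) : isStarComponent G c := by
  have hclosed : ∀ y ∈ {v | v = a ∨ G.Adj a v}, ∀ z, G.Adj y z → z ∈ {v | v = a ∨ G.Adj a v} := by
    rintro y (rfl | hy) z hz
    · exact Or.inr hz
    · exact Or.inl (h y z hy hz)
  refine ⟨a, ha, fun y z hy hyz => ?_⟩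
  rcases c.supp_subset_of_adj_closed ha (Or.inl rfl) hclosed hy with rfl | hay
  · exact Or.inl rfl
  · exact Or.inr (h y z hay hyz)

lemma forall_adj_adj_of_two_neighbors (hP : ¬ G.HasPathFour) {a b e : V}
    (hT : ∀ y z, G.Adj a y → G.Adj y z → ¬ G.Adj a z) (hab : G.Adj a b)
    (hae : G.Adj a e) (hbe : b ≠ e) : ∀ y z, G.Adj a y → G.Adj y z → z = a := by
  intro y z hay hyz
  by_contra hza
  obtain ⟨w, haw, hwy⟩ : ∃ w, G.Adj a w ∧ w ≠ y := by
    by_cases hyb : y = b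
    · exact ⟨e, hae, by rintro rfl; exact hbe hyb.symm⟩
    · exact ⟨b, hab, Ne.symm hyb⟩
  have hzw : z ≠ w := by rintro rfl; exact hT y z hay hyz haw
  exact hP ⟨w, a, y, z, hwy, hzw.symm, Ne.symm hza, haw.symm, hay, hyz⟩

lemma isTriangleComponent_or_isStarComponent (hP : ¬ G.HasPathFour) (c : G.ConnectedComponent) :
    isTriangleComponent G c ∨ isStarComponent G c := by
  by_cases htri : ∃ a ∈ c.supp, ∃ y z, G.Adj a y ∧ G.Adj y z ∧ G.Adj a z
  · obtain ⟨a, ha, y, z, hay, hyz, haz⟩ := htri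
    exact Or.inl (isTriangleComponent_of_triangle hP ha hay haz hyz)
  push Not at htri
  right
  by_cases hdeg : ∃ a ∈ c.supp, ∃ b e, G.Adj a b ∧ G.Adj a e ∧ b ≠ e
  · obtain ⟨a, ha, b, e, hab, hae, hbe⟩ := hdeg
    exact isStarComponent_of_forall_adj_adj ha
      (forall_adj_adj_of_two_neighbors hP (htri a ha) hab hae hbe)
  push Not at hdeg
  obtain ⟨v, hv⟩ := c.nonempty_supp
  by_cases hw : ∃ w, G.Adj v w
  · -- every vertex of `c` has at most one neighbour, so the edge `v w` is all of `c`
    obtain ⟨w, hvw⟩ := hw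
    refine isStarComponent_of_forall_adj_adj (c.mem_supp_of_adj_mem_supp hv hvw) ?_
    intro y z hwy hyz
    obtain rfl : y = v := hdeg w (c.mem_supp_of_adj_mem_supp hv hvw) y v hwy hvw.symm
    exact hdeg y hv z w hyz hvw
  · push Not at hw
    exact isStarComponent_of_forall_adj_adj hv fun y _ hvy _ => absurd hvy (hw y)

lemma not_isTriangleComponent_of_path {p q r s : V} (hpr : p ≠ r) (hps : p ≠ s) (hqs : q ≠ s)
    (hpq : G.Adj p q) (hqr : G.Adj q r) (hrs : G.Adj r s) :
    ¬ isTriangleComponent G (G.connectedComponentMk q) := by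
  classical
  rintro ⟨a, b, d, -, -, -, hsupp, -, -, -⟩
  have hq : q ∈ (G.connectedComponentMk q).supp := rfl
  have hp := (G.connectedComponentMk q).mem_supp_of_adj_mem_supp hq hpq.symm
  have hr := (G.connectedComponentMk q).mem_supp_of_adj_mem_supp hq hqr
  have hs := (G.connectedComponentMk q).mem_supp_of_adj_mem_supp hr hrs
  have hsub : ({p, q, r, s} : Finset V) ⊆ {a, b, d} := by
    rw [← Finset.coe_subset]
    push_cast
    rw [← hsupp]
    simp only [Set.insert_subset_iff, Set.singleton_subset_iff]
    exact ⟨hp, hq, hr, hs⟩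
  have hcard : ({p, q, r, s} : Finset V).card = 4 := by
    rw [Finset.card_eq_four]
    exact ⟨p, q, r, s, hpq.ne, hpr, hps, hqr.ne, hqs, hrs.ne, rfl⟩
  have := (Finset.card_le_card hsub).trans Finset.card_le_three
  omega

lemma not_isStarComponent_of_path {p q r s : V} (hpr : p ≠ r) (hqs : q ≠ s)
    (hpq : G.Adj p q) (hqr : G.Adj q r) (hrs : G.Adj r s) :
    ¬ isStarComponent G (G.connectedComponentMk q) := by
  rintro ⟨v, -, hstar⟩
  have hq : q ∈ (G.connectedComponentMk q).supp := rfl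
  have hr := (G.connectedComponentMk q).mem_supp_of_adj_mem_supp hq hqr
  rcases hstar q r hq hqr with rfl | rfl
  · rcases hstar r s hr hrs with rfl | rfl
    · exact hqr.ne rfl
    · exact hqs rfl
  · rcases hstar q p hq hpq.symm with rfl | rfl
    · exact hqr.ne rfl
    · exact hpr rfl

theorem forall_isTriangleComponent_or_isStarComponent_iff :
    (∀ c : G.ConnectedComponent, isTriangleComponent G c ∨ isStarComponent G c) ↔
      ¬ G.HasPathFour := by
  refine ⟨?_, isTriangleComponent_or_isStarComponent⟩
  rintro h ⟨p, q, r, s, hpr, hps, hqs, hpq, hqr, hrs⟩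
  rcases h (G.connectedComponentMk q) with htri | hstar
  · exact not_isTriangleComponent_of_path hpr hps hqs hpq hqr hrs htri
  · exact not_isStarComponent_of_path hpr hqs hpq hqr hrs hstar

end SimpleGraph

section Link

variable {V : Type*} [DecidableEq V]

lemma Finset.triple_rotate (a b c : V) : ({a, b, c} : Finset V) = {c, a, b} := by
  rw [Finset.pair_comm, Finset.insert_comm]

theorem containsConfig_configD_iff (F : Finset (Finset V)) :
    containsConfig F configD ↔ ∃ x : V, (linkGraph F x).HasPathFour := by
  constructor
  · rintro ⟨f, hf, hmem⟩
    have h012 : {f 0, f 1, f 2} ∈ F := by simpa using hmem {0, 1, 2} (by simp [configD])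
    have h023 : {f 0, f 2, f 3} ∈ F := by simpa using hmem {0, 2, 3} (by simp [configD])
    have h124 : {f 1, f 2, f 4} ∈ F := by simpa using hmem {1, 2, 4} (by simp [configD])
    refine ⟨f 2, f 3, f 0, f 1, f 4, hf.ne (by decide), hf.ne (by decide), hf.ne (by decide),
      ⟨hf.ne (by decide), hf.ne (by decide), hf.ne (by decide), ?_⟩,
      ⟨hf.ne (by decide), hf.ne (by decide), hf.ne (by decide), ?_⟩,
      ⟨hf.ne (by decide), hf.ne (by decide), hf.ne (by decide), ?_⟩⟩
    · rwa [Finset.triple_rotate]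
    · rwa [← Finset.triple_rotate]
    · rwa [Finset.insert_comm]
  · rintro ⟨x, p, q, r, s, hpr, hps, hqs, ⟨hpq, hpx, hqx, hFpq⟩, ⟨hqr, -, hrx, hFqr⟩,
      ⟨hrs, -, hsx, hFrs⟩⟩
    refine ⟨![q, r, x, p, s], ?_, ?_⟩
    · rw [← List.nodup_ofFn]
      simp [*, Ne.symm hpq, Ne.symm hpr, Ne.symm hpx, Ne.symm hsx]
    · intro t ht
      simp only [configD, List.mem_cons, List.not_mem_nil, or_false] at ht
      rcases ht with rfl | rfl | rfl <;>
        simp only [Finset.image_insert, Finset.image_singleton, Matrix.cons_val_zero,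
          Matrix.cons_val_one, Matrix.cons_val]
      · rwa [Finset.triple_rotate]
      · rwa [← Finset.triple_rotate]
      · rwa [Finset.insert_comm]

end Link

theorem Dfree_iff_links_general (V : Type*) [DecidableEq V] (F : Finset (Finset V)) :
    ¬ containsConfig F configD ↔
      ∀ x : V, ∀ c : (linkGraph F x).ConnectedComponent,
        isTriangleComponent (linkGraph F x) c ∨ isStarComponent (linkGraph F x) c := by
  rw [containsConfig_configD_iff, not_exists]
  exact forall_congr' fun x => SimpleGraph.forall_isTriangleComponent_or_isStarComponent_iff.symm

/-- A triple system is D-free iff every connected component of every link is a triangle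
or a star. -/
theorem Dfree_iff_links (V : Type*) [DecidableEq V] (F : Finset (Finset V))
    (hF : isTripleSystem F) :
    ¬ containsConfig F configD ↔
      ∀ x : V, ∀ c : (linkGraph F x).ConnectedComponent,
        isTriangleComponent (linkGraph F x) c ∨ isStarComponent (linkGraph F x) c :=
  Dfree_iff_links_general V F
end

section
/- Let F be a D-free triple system on n vertices. If n ≡ 1 (mod 3) then |F| ≤ n(n−1)/3, and if n ≢ 1 (mod 3) then |F| ≤ n(n−2)/3. -/
open Finset

/-!
The link of a vertex `v` (the pairs `{x, y}` with `{v, x, y} ∈ F`) contains no path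
`c - a - b - d` with three edges, since the triples `vab, vac, vbd` would form a copy of `D`.
Every connected component of such a graph is a triangle or a star, so a graph of this kind on
`m` vertices has at most `m` edges, and at most `m - 1` when `3 ∤ m`. Each vertex therefore lies
in at most that many triples for `m = n - 1`, and summing the degrees gives `3 |F|`.
-/

namespace DFree

variable {V : Type*} [DecidableEq V]

-- The extremal number ex(m, P₄): disjoint triangles, with a star as one component when 3 ∤ m.
def exP4 (m : ℕ) : ℕ := if m % 3 = 0 then m else m - 1

lemma exP4_le (m : ℕ) : exP4 m ≤ m := by unfold exP4; split <;> omega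

lemma sub_one_le_exP4 (m : ℕ) : m - 1 ≤ exP4 m := by unfold exP4; split <;> omega

lemma exP4_sub_one_of_mod_eq_one {n : ℕ} (hn : n % 3 = 1) : exP4 (n - 1) = n - 1 := by
  unfold exP4; split <;> omega

lemma exP4_sub_one_le_of_mod_ne_one {n : ℕ} (hn : n % 3 ≠ 1) : exP4 (n - 1) ≤ n - 2 := by
  unfold exP4; split <;> omega

lemma exP4_sub_three_add_three_le {m : ℕ} (hm : 3 ≤ m) : exP4 (m - 3) + 3 ≤ exP4 m := by
  unfold exP4; split_ifs <;> omega

-- No path `c - a - b - d` on four distinct vertices (`a ≠ b`, `a ≠ c`, `b ≠ d` hold for edges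
-- of a loopless graph).
def P4Free (E : Finset (Finset V)) : Prop :=
  ∀ a b c d, {a, b} ∈ E → {a, c} ∈ E → {b, d} ∈ E → c = b ∨ d = a ∨ c = d

lemma P4Free.mono {E E' : Finset (Finset V)} (h : P4Free E) (h' : E' ⊆ E) : P4Free E' :=
  fun a b c d hab hac hbd => h a b c d (h' hab) (h' hac) (h' hbd)

-- `R` is a union of connected components of `E`.
def AdjClosed (E : Finset (Finset V)) (R : Finset V) : Prop :=
  ∀ x ∈ R, ∀ y, {x, y} ∈ E → y ∈ R

section Graph

variable {S R : Finset V} {E : Finset (Finset V)}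

lemma ne_of_pair_mem (hE : E ⊆ S.powersetCard 2) {x y : V} (h : {x, y} ∈ E) : x ≠ y := by
  rintro rfl
  simpa using (mem_powersetCard.1 (hE h)).2

lemma card_filter_subset_le_choose (hE : E ⊆ S.powersetCard 2) (R : Finset V) :
    #{e ∈ E | e ⊆ R} ≤ (#R).choose 2 := by
  rw [← card_powersetCard]
  refine card_le_card fun e he => ?_
  rw [mem_filter] at he
  exact mem_powersetCard.2 ⟨he.2, (mem_powersetCard.1 (hE he.1)).2⟩

lemma card_filter_subset_lt_of_forall_mem (hE : E ⊆ S.powersetCard 2) {a : V} (ha : a ∈ R)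
    (h : ∀ e ∈ E, e ⊆ R → a ∈ e) : #{e ∈ E | e ⊆ R} < #R := by
  have hmaps : Set.MapsTo (·.erase a) (filter (· ⊆ R) E : Set (Finset V))
      ((R.erase a).powersetCard 1) := by
    intro e he
    rw [mem_coe, mem_filter] at he
    rw [mem_coe, mem_powersetCard, card_erase_of_mem (h e he.1 he.2),
      (mem_powersetCard.1 (hE he.1)).2]
    exact ⟨erase_subset_erase a he.2, rfl⟩
  have hinj : Set.InjOn (·.erase a) (filter (· ⊆ R) E : Set (Finset V)) := fun e he e' he' => by
    rw [mem_coe, mem_filter] at he he'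
    exact erase_injOn' a (h e he.1 he.2) (h e' he'.1 he'.2)
  have := card_le_card_of_injOn _ hmaps hinj
  rw [card_powersetCard, Nat.choose_one_right, card_erase_of_mem ha] at this
  have := card_pos.2 ⟨a, ha⟩
  omega

lemma AdjClosed.filter_not_subset_subset (hR : AdjClosed E R) (hE : E ⊆ S.powersetCard 2) :
    {e ∈ E | ¬ e ⊆ R} ⊆ (S \ R).powersetCard 2 := by
  intro e he
  rw [mem_filter] at he
  obtain ⟨heS, he2⟩ := mem_powersetCard.1 (hE he.1)
  obtain ⟨x, y, -, rfl⟩ := card_eq_two.1 he2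
  have hx : x ∉ R := fun hx => he.2 (insert_subset hx (singleton_subset_iff.2 (hR x hx y he.1)))
  have hy : y ∉ R := fun hy => hx (hR y hy x (pair_comm x y ▸ he.1))
  refine mem_powersetCard.2 ⟨fun z hz => ?_, he2⟩
  rw [mem_sdiff]
  rcases mem_insert.1 hz with rfl | hz
  · exact ⟨heS hz, hx⟩
  · rw [mem_singleton.1 hz]
    exact ⟨heS (by simp), hy⟩

variable (hE : E ⊆ S.powersetCard 2) (hP : P4Free E)
include hE hP

lemma eq_of_adj_leaf {a b c x : V} (hab : {a, b} ∈ E) (hleaf : ∀ y, {b, y} ∈ E → y = a)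
    (hac : {a, c} ∈ E) (hcx : {c, x} ∈ E) : x = a := by
  rcases hP a c b x hac hab hcx with rfl | rfl | rfl
  · exact hleaf x hcx
  · rfl
  · obtain rfl := hleaf c (pair_comm c b ▸ hcx)
    exact (ne_of_pair_mem hE hac rfl).elim

lemma exists_star {a b : V} (hab : {a, b} ∈ E) (hleaf : ∀ y, {b, y} ∈ E → y = a) :
    ∃ R ⊆ S, a ∈ R ∧ AdjClosed E R ∧ #{e ∈ E | e ⊆ R} < #R := by
  have hS : ∀ {x y}, {x, y} ∈ E → y ∈ S := fun h => (mem_powersetCard.1 (hE h)).1 (by simp)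
  refine ⟨insert a {x ∈ S | {a, x} ∈ E}, insert_subset (hS (pair_comm a b ▸ hab))
    (filter_subset _ _), mem_insert_self _ _, ?_, card_filter_subset_lt_of_forall_mem hE
    (mem_insert_self _ _) ?_⟩
  · intro x hx y hxy
    rcases mem_insert.1 hx with rfl | hx
    · exact mem_insert_of_mem (mem_filter.2 ⟨hS hxy, hxy⟩)
    · rw [eq_of_adj_leaf hE hP hab hleaf (mem_filter.1 hx).2 hxy]
      exact mem_insert_self _ _
  · intro e he heR
    obtain ⟨x, y, -, rfl⟩ := card_eq_two.1 (mem_powersetCard.1 (hE he)).2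
    rcases mem_insert.1 (heR (mem_insert_self x {y})) with rfl | hx
    · exact mem_insert_self _ _
    · rw [eq_of_adj_leaf hE hP hab hleaf (mem_filter.1 hx).2 he]
      simp

lemma adjClosed_triangle {a b c : V} (hab : {a, b} ∈ E) (hac : {a, c} ∈ E)
    (hbc : {b, c} ∈ E) :
    AdjClosed E {a, b, c} := by
  have hba : {b, a} ∈ E := pair_comm a b ▸ hab
  have hca : {c, a} ∈ E := pair_comm a c ▸ hac
  intro x hx y hxy
  simp only [mem_insert, mem_singleton] at hx ⊢
  rcases hx with rfl | rfl | rfl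
  · rcases hP x b y c hab hxy hbc with rfl | rfl | rfl
    · simp
    · exact (ne_of_pair_mem hE hac rfl).elim
    · simp
  · rcases hP x a y c hba hxy hac with rfl | rfl | rfl
    · simp
    · exact (ne_of_pair_mem hE hbc rfl).elim
    · simp
  · rcases hP x a y b hca hxy hab with rfl | rfl | rfl
    · simp
    · exact (ne_of_pair_mem hE hbc rfl).elim
    · simp

lemma exists_adjClosed {a b : V} (hab : {a, b} ∈ E) :
    ∃ R ⊆ S, R.Nonempty ∧ AdjClosed E R ∧ (#R = 3 ∨ #{e ∈ E | e ⊆ R} < #R) := by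
  have hba : {b, a} ∈ E := pair_comm a b ▸ hab
  by_cases hb : ∀ y, {b, y} ∈ E → y = a
  · obtain ⟨R, hRS, haR, hR, hcard⟩ := exists_star hE hP hab hb
    exact ⟨R, hRS, ⟨a, haR⟩, hR, Or.inr hcard⟩
  by_cases ha : ∀ y, {a, y} ∈ E → y = b
  · obtain ⟨R, hRS, hbR, hR, hcard⟩ := exists_star hE hP hba ha
    exact ⟨R, hRS, ⟨b, hbR⟩, hR, Or.inr hcard⟩
  push Not at ha hb
  obtain ⟨c, hac, hcb⟩ := ha
  obtain ⟨d, hbd, hda⟩ := hb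
  -- the path `c - a - b - d` must close up into a triangle
  obtain rfl : c = d := (hP a b c d hab hac hbd).resolve_left hcb |>.resolve_left hda
  have hS : ∀ {x y}, {x, y} ∈ E → x ∈ S := fun h => (mem_powersetCard.1 (hE h)).1 (by simp)
  refine ⟨{a, b, c}, ?_, insert_nonempty _ _, adjClosed_triangle hE hP hab hac hbd, Or.inl ?_⟩
  · simp [insert_subset_iff, hS hab, hS hba, hS (pair_comm a c ▸ hac)]
  · rw [card_insert_of_notMem, card_pair hcb.symm]
    simp [ne_of_pair_mem hE hab, ne_of_pair_mem hE hac]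

end Graph

theorem card_le_exP4 {S : Finset V} {E : Finset (Finset V)} (hE : E ⊆ S.powersetCard 2)
    (hP : P4Free E) : #E ≤ exP4 #S := by
  induction hS : #S using Nat.strong_induction_on generalizing S E with
  | _ s ih =>
  obtain rfl | ⟨e, he⟩ := E.eq_empty_or_nonempty
  · simp
  obtain ⟨a, b, -, rfl⟩ := card_eq_two.1 (mem_powersetCard.1 (hE he)).2
  obtain ⟨R, hRS, hR0, hR, hcard⟩ := exists_adjClosed hE hP he
  have hrest := ih (#(S \ R)) (by grind [card_sdiff_of_subset hRS, card_pos, card_le_card hRS])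
    (hR.filter_not_subset_subset hE) (hP.mono (filter_subset _ _)) rfl
  rw [card_sdiff_of_subset hRS, hS] at hrest
  rw [← card_filter_add_card_filter_not (· ⊆ R)]
  have hRs : #R ≤ s := hS ▸ card_le_card hRS
  rcases hcard with h3 | hlt
  · have hin : #{e ∈ E | e ⊆ R} ≤ 3 := by simpa [h3] using card_filter_subset_le_choose hE R
    rw [h3] at hrest hRs
    have := exP4_sub_three_add_three_le hRs
    omega
  · have := exP4_le (s - #R)
    have := sub_one_le_exP4 s
    omega

def link (F : Finset (Finset V)) (v : V) : Finset (Finset V) :=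
  {t ∈ F | v ∈ t}.image (·.erase v)

section Link

variable {F : Finset (Finset V)} {v : V}

lemma mem_link {e : Finset V} : e ∈ link F v ↔ v ∉ e ∧ insert v e ∈ F := by
  constructor
  · intro he
    obtain ⟨t, ht, rfl⟩ := mem_image.1 he
    rw [mem_filter] at ht
    exact ⟨notMem_erase v t, (insert_erase ht.2).symm ▸ ht.1⟩
  · rintro ⟨hv, he⟩
    exact mem_image.2 ⟨insert v e, mem_filter.2 ⟨he, mem_insert_self v e⟩, erase_insert hv⟩

lemma card_link : #(link F v) = #{t ∈ F | v ∈ t} :=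
  card_image_of_injOn fun _ ht _ ht' => erase_injOn' v (mem_filter.1 ht).2 (mem_filter.1 ht').2

lemma link_subset_powersetCard [Fintype V] (hF : isTripleSystem F) :
    link F v ⊆ (univ.erase v).powersetCard 2 := by
  intro e he
  obtain ⟨hv, hvF⟩ := mem_link.1 he
  have := hF _ hvF
  rw [card_insert_of_notMem hv] at this
  refine mem_powersetCard.2 ⟨fun x hx => ?_, by omega⟩
  exact mem_erase.2 ⟨ne_of_mem_of_not_mem hx hv, mem_univ x⟩

lemma p4Free_link [Fintype V] (hF : isTripleSystem F) (hD : ¬ containsConfig F configD) :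
    P4Free (link F v) := by
  intro a b c d hab hac hbd
  by_contra! hne
  obtain ⟨hcb, hda, hcd⟩ := hne
  have hE := link_subset_powersetCard (v := v) hF
  have := ne_of_pair_mem hE hab
  have := ne_of_pair_mem hE hac
  have := ne_of_pair_mem hE hbd
  obtain ⟨hvab, hab⟩ := mem_link.1 hab
  obtain ⟨hvac, hac⟩ := mem_link.1 hac
  obtain ⟨hvbd, hbd⟩ := mem_link.1 hbd
  simp only [mem_insert, mem_singleton, not_or] at hvab hvac hvbd
  apply hD
  refine ⟨![a, b, v, c, d], ?_, ?_⟩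
  · rw [← List.nodup_ofFn]
    simp only [List.ofFn_succ, List.ofFn_zero, Matrix.cons_val_zero, Matrix.cons_val_succ,
      List.nodup_cons, List.mem_cons, List.not_mem_nil, List.nodup_nil]
    grind
  · simp only [configD, List.mem_cons, List.mem_nil_iff, or_false]
    rintro t (rfl | rfl | rfl)
    · convert hab using 1
      simp only [image_insert, image_singleton, Matrix.cons_val]
      grind
    · convert hac using 1
      simp only [image_insert, image_singleton, Matrix.cons_val]
      grind
    · convert hbd using 1
      simp only [image_insert, image_singleton, Matrix.cons_val]
      grind

variable [Fintype V] (hF : isTripleSystem F) (hD : ¬ containsConfig F configD)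
include hF hD

lemma card_filter_mem_le_exP4 (v : V) : #{t ∈ F | v ∈ t} ≤ exP4 (Fintype.card V - 1) := by
  rw [← card_link, ← card_univ, ← card_erase_of_mem (mem_univ v)]
  exact card_le_exP4 (link_subset_powersetCard hF) (p4Free_link hF hD)

lemma three_mul_card_le : 3 * #F ≤ Fintype.card V * exP4 (Fintype.card V - 1) :=
  calc 3 * #F = ∑ t ∈ F, #t := by rw [sum_const_nat hF, mul_comm]
    _ = ∑ v, #{t ∈ F | v ∈ t} := by
      simpa [bipartiteAbove, bipartiteBelow] using
        (sum_card_bipartiteAbove_eq_sum_card_bipartiteBelow (s := univ) (t := F) (· ∈ ·)).symm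
    _ ≤ ∑ _v : V, exP4 (Fintype.card V - 1) :=
      sum_le_sum fun v _ => card_filter_mem_le_exP4 hF hD v
    _ = Fintype.card V * exP4 (Fintype.card V - 1) := by simp

end Link

end DFree

open DFree

/-- Upper bounds on the size of a D-free triple system on n vertices. -/
theorem Dfree_upper (n : ℕ) (F : Finset (Finset (Fin n))) (hF : isTripleSystem F)
    (hD : ¬ containsConfig F configD) :
    (n % 3 = 1 → F.card ≤ n * (n - 1) / 3) ∧
    (n % 3 ≠ 1 → F.card ≤ n * (n - 2) / 3) := by
  have h := three_mul_card_le hF hD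
  rw [Fintype.card_fin] at h
  refine ⟨fun hn => ?_, fun hn => ?_⟩ <;> rw [Nat.le_div_iff_mul_le three_pos, mul_comm]
  · rwa [exP4_sub_one_of_mod_eq_one hn] at h
  · exact h.trans (Nat.mul_le_mul_left n (exP4_sub_one_le_of_mod_ne_one hn))
end

section
/- A triple system F on a finite vertex set V is both C-free and D-free if and only if every triple F ∈ F contains at least two own pairs, i.e. at least two of its three 2-element subsets are contained in no other member of F. -/
lemma img3 {V : Type*} [DecidableEq V] {m : ℕ} (f : Fin m → V) (i j k : Fin m) :
    ({i, j, k} : Finset (Fin m)).image f = {f i, f j, f k} := by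
  simp [Finset.image_insert]

lemma inj4 {V : Type*} (x y z d : V) (h1 : x ≠ y) (h2 : x ≠ z) (h3 : x ≠ d)
    (h4 : y ≠ z) (h5 : y ≠ d) (h6 : z ≠ d) :
    Function.Injective ![x, y, z, d] := by
  intro i j hij
  fin_cases i <;> fin_cases j <;> simp_all

lemma inj5 {V : Type*} (x y z d e : V) (h1 : x ≠ y) (h2 : x ≠ z) (h3 : x ≠ d) (h4 : x ≠ e)
    (h5 : y ≠ z) (h6 : y ≠ d) (h7 : y ≠ e) (h8 : z ≠ d) (h9 : z ≠ e) (h10 : d ≠ e) :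
    Function.Injective ![x, y, z, d, e] := by
  intro i j hij
  fin_cases i <;> fin_cases j <;> simp_all

/-- If a triple `t` has two distinct non-own pairs, it has fewer than two own pairs. -/
lemma twoBad {V : Type*} [DecidableEq V] (F : Finset (Finset V)) (t : Finset V)
    (ht3 : t.card = 3) (e1 e2 : Finset V)
    (h1 : e1 ∈ t.powersetCard 2) (h2 : e2 ∈ t.powersetCard 2) (hne : e1 ≠ e2)
    (n1 : ¬ ∀ u ∈ F, e1 ⊆ u → u = t) (n2 : ¬ ∀ u ∈ F, e2 ⊆ u → u = t) :
    ¬ (2 ≤ ((t.powersetCard 2).filter (fun e => ∀ u ∈ F, e ⊆ u → u = t)).card) := by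
  intro h
  set S := (t.powersetCard 2).filter (fun e => ∀ u ∈ F, e ⊆ u → u = t) with hS
  have hdisj : Disjoint S ({e1, e2} : Finset (Finset V)) := by
    rw [Finset.disjoint_right]
    intro e he heS
    rw [hS, Finset.mem_filter] at heS
    rcases Finset.mem_insert.mp he with rfl | he
    · exact n1 heS.2
    · rw [Finset.mem_singleton] at he; subst he; exact n2 heS.2
  have hsub : S ∪ {e1, e2} ⊆ t.powersetCard 2 := by
    apply Finset.union_subset (Finset.filter_subset _ _)
    intro e he
    rcases Finset.mem_insert.mp he with rfl | he
    · exact h1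
    · rw [Finset.mem_singleton] at he; subst he; exact h2
  have hc2 : ({e1, e2} : Finset (Finset V)).card = 2 := Finset.card_pair hne
  have h3 : (t.powersetCard 2).card = 3 := by
    rw [Finset.card_powersetCard, ht3]; rfl
  have := Finset.card_le_card hsub
  rw [Finset.card_union_of_disjoint hdisj, hc2, h3] at this
  omega

set_option maxHeartbeats 1000000 in
/-- A triple system is C-free and D-free iff every triple has at least two own pairs,
i.e. at least two of its three 2-element subsets are contained in no other member. -/
theorem CDfree_iff_ownpairs {V : Type*} [DecidableEq V] (F : Finset (Finset V))
    (hF : isTripleSystem F) :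
    (¬ containsConfig F configC ∧ ¬ containsConfig F configD) ↔
      ∀ t ∈ F, 2 ≤ ((t.powersetCard 2).filter (fun e => ∀ u ∈ F, e ⊆ u → u = t)).card := by
  constructor
  · rintro ⟨hC, hD⟩ t ht
    by_contra hcard
    have ht3 : t.card = 3 := hF t ht
    have h3p : (t.powersetCard 2).card = 3 := by
      rw [Finset.card_powersetCard, ht3]; rfl
    have hsum := Finset.card_filter_add_card_filter_not
      (s := t.powersetCard 2) (p := fun e => ∀ u ∈ F, e ⊆ u → u = t)
    rw [h3p] at hsum
    have hB : 1 < ((t.powersetCard 2).filter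
        (fun e => ¬ ∀ u ∈ F, e ⊆ u → u = t)).card := by omega
    obtain ⟨e1, he1, e2, he2, hne⟩ := Finset.one_lt_card.mp hB
    rw [Finset.mem_filter, Finset.mem_powersetCard] at he1 he2
    obtain ⟨⟨hsub1, hc1⟩, n1⟩ := he1
    obtain ⟨⟨hsub2, hc2⟩, n2⟩ := he2
    -- common vertex z
    have hucard : (e1 ∪ e2).card ≤ 3 :=
      le_trans (Finset.card_le_card (Finset.union_subset hsub1 hsub2)) (le_of_eq ht3)
    have hint : 0 < (e1 ∩ e2).card := by
      have := Finset.card_union_add_card_inter e1 e2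
      omega
    obtain ⟨z, hz⟩ := Finset.card_pos.mp hint
    rw [Finset.mem_inter] at hz
    obtain ⟨hz1, hz2⟩ := hz
    -- e1 = {z, x}
    have hce1 : (e1.erase z).card = 1 := by rw [Finset.card_erase_of_mem hz1, hc1]
    obtain ⟨x, hx⟩ := Finset.card_eq_one.mp hce1
    have hxz : x ≠ z := by
      have : x ∈ e1.erase z := hx ▸ Finset.mem_singleton_self x
      exact Finset.ne_of_mem_erase this
    have hx1 : x ∈ e1 := by
      have : x ∈ e1.erase z := hx ▸ Finset.mem_singleton_self x
      exact Finset.mem_of_mem_erase this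
    have he1eq : e1 = {z, x} := by
      rw [← Finset.insert_erase hz1, hx]
    -- e2 = {z, y}
    have hce2 : (e2.erase z).card = 1 := by rw [Finset.card_erase_of_mem hz2, hc2]
    obtain ⟨y, hy⟩ := Finset.card_eq_one.mp hce2
    have hyz : y ≠ z := by
      have : y ∈ e2.erase z := hy ▸ Finset.mem_singleton_self y
      exact Finset.ne_of_mem_erase this
    have hy2 : y ∈ e2 := by
      have : y ∈ e2.erase z := hy ▸ Finset.mem_singleton_self y
      exact Finset.mem_of_mem_erase this
    have he2eq : e2 = {z, y} := by
      rw [← Finset.insert_erase hz2, hy]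
    have hxy : x ≠ y := by
      rintro rfl; exact hne (he1eq.trans he2eq.symm)
    -- t = {z, x, y}
    have hzt : z ∈ t := hsub1 hz1
    have hxt : x ∈ t := hsub1 hx1
    have hyt : y ∈ t := hsub2 hy2
    have hsubT : ({z, x, y} : Finset V) ⊆ t := by
      intro a ha
      simp only [Finset.mem_insert, Finset.mem_singleton] at ha
      rcases ha with rfl | rfl | rfl <;> assumption
    have hcT : ({z, x, y} : Finset V).card = 3 := by
      rw [Finset.card_insert_of_notMem, Finset.card_insert_of_notMem,
        Finset.card_singleton]
      · simp [hxy]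
      · simp [hxz.symm, hyz.symm]
    have hteq : t = {z, x, y} :=
      (Finset.eq_of_subset_of_card_le hsubT (by rw [ht3, hcT])).symm
    -- u = {z, x, d}
    push_neg at n1 n2
    obtain ⟨u, huF, hsubu, hut⟩ := n1
    obtain ⟨w, hwF, hsubw, hwt⟩ := n2
    have hu3 : u.card = 3 := hF u huF
    have hw3 : w.card = 3 := hF w hwF
    have hdcard : (u \ e1).card = 1 := by rw [Finset.card_sdiff_of_subset hsubu, hu3, hc1]
    obtain ⟨d, hd⟩ := Finset.card_eq_one.mp hdcard
    have hdmem : d ∈ u \ e1 := hd ▸ Finset.mem_singleton_self d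
    rw [Finset.mem_sdiff] at hdmem
    have hdz : d ≠ z := fun h => hdmem.2 (h ▸ (he1eq ▸ (by simp : z ∈ ({z,x} : Finset V))))
    have hdx : d ≠ x := fun h => hdmem.2 (h ▸ (he1eq ▸ (by simp : x ∈ ({z,x} : Finset V))))
    have hueq : u = {z, x, d} := by
      rw [← Finset.union_sdiff_of_subset hsubu, hd, he1eq]
      ext a; simp only [Finset.mem_insert, Finset.mem_singleton, Finset.mem_union]; tauto
    have hdy : d ≠ y := by
      rintro rfl
      apply hut
      rw [hueq, hteq]
    -- w = {z, y, e}
    have hecard : (w \ e2).card = 1 := by rw [Finset.card_sdiff_of_subset hsubw, hw3, hc2]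
    obtain ⟨e, he⟩ := Finset.card_eq_one.mp hecard
    have hemem : e ∈ w \ e2 := he ▸ Finset.mem_singleton_self e
    rw [Finset.mem_sdiff] at hemem
    have hez : e ≠ z := fun h => hemem.2 (h ▸ (he2eq ▸ (by simp : z ∈ ({z,y} : Finset V))))
    have hey : e ≠ y := fun h => hemem.2 (h ▸ (he2eq ▸ (by simp : y ∈ ({z,y} : Finset V))))
    have hweq : w = {z, y, e} := by
      rw [← Finset.union_sdiff_of_subset hsubw, he, he2eq]
      ext a; simp only [Finset.mem_insert, Finset.mem_singleton, Finset.mem_union]; tauto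
    have hex : e ≠ x := by
      rintro rfl
      apply hwt
      rw [hweq, hteq]
      ext a; simp only [Finset.mem_insert, Finset.mem_singleton, Finset.mem_union]; tauto
    by_cases hde : d = e
    · -- configuration C with f = ![x, y, d, z]
      subst hde
      apply hC
      refine ⟨![x, y, d, z], inj4 x y d z hxy hdx.symm hxz hdy.symm hyz hdz, ?_⟩
      · intro s hs
        simp only [configC, List.mem_cons, List.not_mem_nil, or_false] at hs
        rcases hs with rfl | rfl | rfl
        · have : ({0,1,3} : Finset (Fin 4)).image ![x, y, d, z] = t := by
            rw [img3]
            show _ = _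
            rw [hteq]
            ext a; simp only [Finset.mem_insert, Finset.mem_singleton, Finset.mem_union]; tauto
          rw [this]; exact ht
        · have : ({0,2,3} : Finset (Fin 4)).image ![x, y, d, z] = u := by
            rw [img3]
            show _ = _
            rw [hueq]
            ext a; simp only [Finset.mem_insert, Finset.mem_singleton, Finset.mem_union]; tauto
          rw [this]; exact huF
        · have : ({1,2,3} : Finset (Fin 4)).image ![x, y, d, z] = w := by
            rw [img3]
            show _ = _
            rw [hweq]
            ext a; simp only [Finset.mem_insert, Finset.mem_singleton, Finset.mem_union]; tauto
          rw [this]; exact hwF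
    · -- configuration D with f = ![x, y, z, d, e]
      apply hD
      refine ⟨![x, y, z, d, e], inj5 x y z d e hxy hxz hdx.symm hex.symm hyz hdy.symm hey.symm hdz.symm hez.symm hde, ?_⟩
      · intro s hs
        simp only [configD, List.mem_cons, List.not_mem_nil, or_false] at hs
        rcases hs with rfl | rfl | rfl
        · have : ({0,1,2} : Finset (Fin 5)).image ![x, y, z, d, e] = t := by
            rw [img3]
            show _ = _
            rw [hteq]
            ext a; simp only [Finset.mem_insert, Finset.mem_singleton, Finset.mem_union]; tauto
          rw [this]; exact ht
        · have : ({0,2,3} : Finset (Fin 5)).image ![x, y, z, d, e] = u := by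
            rw [img3]
            show _ = _
            rw [hueq]
            ext a; simp only [Finset.mem_insert, Finset.mem_singleton, Finset.mem_union]; tauto
          rw [this]; exact huF
        · have : ({1,2,4} : Finset (Fin 5)).image ![x, y, z, d, e] = w := by
            rw [img3]
            show _ = _
            rw [hweq]
            ext a; simp only [Finset.mem_insert, Finset.mem_singleton, Finset.mem_union]; tauto
          rw [this]; exact hwF
  · intro h
    constructor
    · rintro ⟨f, hf, hmem⟩
      have h1 : ({f 0, f 1, f 3} : Finset V) ∈ F := by
        have := hmem {0,1,3} (by simp [configC])
        simpa [Finset.image_insert] using this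
      have h2 : ({f 0, f 2, f 3} : Finset V) ∈ F := by
        have := hmem {0,2,3} (by simp [configC])
        simpa [Finset.image_insert] using this
      have h3 : ({f 1, f 2, f 3} : Finset V) ∈ F := by
        have := hmem {1,2,3} (by simp [configC])
        simpa [Finset.image_insert] using this
      set t : Finset V := {f 0, f 1, f 3} with htdef
      refine twoBad F t (hF t h1) {f 0, f 3} {f 1, f 3} ?_ ?_ ?_ ?_ ?_ (h t h1)
      · rw [Finset.mem_powersetCard]
        refine ⟨by intro a ha; rw [htdef]; simp at ha ⊢; tauto, Finset.card_pair (hf.ne (by decide))⟩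
      · rw [Finset.mem_powersetCard]
        refine ⟨by intro a ha; rw [htdef]; simp at ha ⊢; tauto, Finset.card_pair (hf.ne (by decide))⟩
      · intro hq
        have : f 0 ∈ ({f 1, f 3} : Finset V) := hq ▸ (by simp)
        simp only [Finset.mem_insert, Finset.mem_singleton] at this
        rcases this with h' | h' <;> exact absurd (hf h') (by decide)
      · intro hall
        have : ({f 0, f 2, f 3} : Finset V) = t :=
          hall _ h2 (by intro a ha; simp at ha ⊢; tauto)
        have h20 : f 2 ∈ t := this ▸ (by simp)
        rw [htdef] at h20
        simp only [Finset.mem_insert, Finset.mem_singleton] at h20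
        rcases h20 with h' | h' | h' <;> exact absurd (hf h') (by decide)
      · intro hall
        have : ({f 1, f 2, f 3} : Finset V) = t :=
          hall _ h3 (by intro a ha; simp at ha ⊢; tauto)
        have h20 : f 2 ∈ t := this ▸ (by simp)
        rw [htdef] at h20
        simp only [Finset.mem_insert, Finset.mem_singleton] at h20
        rcases h20 with h' | h' | h' <;> exact absurd (hf h') (by decide)
    · rintro ⟨f, hf, hmem⟩
      have h1 : ({f 0, f 1, f 2} : Finset V) ∈ F := by
        have := hmem {0,1,2} (by simp [configD])
        simpa [Finset.image_insert] using this
      have h2 : ({f 0, f 2, f 3} : Finset V) ∈ F := by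
        have := hmem {0,2,3} (by simp [configD])
        simpa [Finset.image_insert] using this
      have h3 : ({f 1, f 2, f 4} : Finset V) ∈ F := by
        have := hmem {1,2,4} (by simp [configD])
        simpa [Finset.image_insert] using this
      set t : Finset V := {f 0, f 1, f 2} with htdef
      refine twoBad F t (hF t h1) {f 0, f 2} {f 1, f 2} ?_ ?_ ?_ ?_ ?_ (h t h1)
      · rw [Finset.mem_powersetCard]
        refine ⟨by intro a ha; rw [htdef]; simp at ha ⊢; tauto, Finset.card_pair (hf.ne (by decide))⟩
      · rw [Finset.mem_powersetCard]
        refine ⟨by intro a ha; rw [htdef]; simp at ha ⊢; tauto, Finset.card_pair (hf.ne (by decide))⟩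
      · intro hq
        have : f 0 ∈ ({f 1, f 2} : Finset V) := hq ▸ (by simp)
        simp only [Finset.mem_insert, Finset.mem_singleton] at this
        rcases this with h' | h' <;> exact absurd (hf h') (by decide)
      · intro hall
        have : ({f 0, f 2, f 3} : Finset V) = t :=
          hall _ h2 (by intro a ha; simp at ha ⊢; tauto)
        have h20 : f 3 ∈ t := this ▸ (by simp)
        rw [htdef] at h20
        simp only [Finset.mem_insert, Finset.mem_singleton] at h20
        rcases h20 with h' | h' | h' <;> exact absurd (hf h') (by decide)
      · intro hall
        have : ({f 1, f 2, f 4} : Finset V) = t :=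
          hall _ h3 (by intro a ha; simp at ha ⊢; tauto)
        have h20 : f 4 ∈ t := this ▸ (by simp)
        rw [htdef] at h20
        simp only [Finset.mem_insert, Finset.mem_singleton] at h20
        rcases h20 with h' | h' | h' <;> exact absurd (hf h') (by decide)
end

section
/- For every positive integer n, the maximum number of triples in a triple system on n vertices that is both C-free and D-free equals ⌊(n−1)²/4⌋; that is, ex(n, CD) = ⌊(n−1)²/4⌋. -/
/-!
A pair of vertices of a triple `T ∈ F` is *shared* if it lies in another triple. If `T` shares
`{a, c}` with `T₁` and `{b, c}` with `T₂`, then `T, T₁, T₂` form a copy of C when `T₁` and `T₂`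
have the same third vertex, and a copy of D otherwise; conversely, the first triple of C or of D
shares two pairs. So `F` is CD-free exactly when every triple `T` has a core: a pair `p ⊆ T`
containing every pair that `T` shares.

Upper bound: the two non-core pairs of a triple lie in no other triple, so they are `2|F|`
distinct pairs, none of them a core, and each meets the set `K` of core vertices. With `m` cores
and `k = |K| ≤ 2m` this gives `2|F| + m ≤ C(n,2) - C(n-k,2)`, hence
`4|F| ≤ k(2n - k - 2) = (n-1)² - (n-1-k)²`.

Lower bound: in the family of triples `{2i, 2i+1, c}` with `2i + 1 < c < n`, the pair
`{2i, 2i+1}` is a core of each triple, and there are `∑_{c<n} ⌊c/2⌋ = ⌊(n-1)²/4⌋` triples.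
-/

open Finset

variable {V : Type*} [DecidableEq V] {F : Finset (Finset V)}

theorem sum_range_div_two (n : ℕ) : ∑ c ∈ range n, c / 2 = (n - 1) ^ 2 / 4 := by
  induction n with
  | zero => simp
  | succ n ih =>
    rw [sum_range_succ, ih, Nat.add_sub_cancel]
    rcases Nat.even_or_odd' n with ⟨t, rfl | rfl⟩
    · rcases t with _ | t
      · simp
      · have h₁ : (2 * (t + 1) - 1) ^ 2 = 4 * (t * t + t) + 1 := by
          rw [show 2 * (t + 1) - 1 = 2 * t + 1 by omega]; ring
        have h₂ : (2 * (t + 1)) ^ 2 = 4 * (t * t + 2 * t + 1) := by ring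
        omega
    · have h₁ : (2 * t + 1 - 1) ^ 2 = 4 * (t * t) := by rw [Nat.add_sub_cancel]; ring
      have h₂ : (2 * t + 1) ^ 2 = 4 * (t * t + t) + 1 := by ring
      omega

theorem four_mul_le_sq_of_le_choose_sub_choose {f m k n : ℕ} (hkn : k ≤ n) (hkm : k ≤ 2 * m)
    (h : 2 * f + m ≤ n.choose 2 - (n - k).choose 2) : 4 * f ≤ (n - 1) ^ 2 := by
  obtain ⟨j, rfl⟩ := Nat.exists_eq_add_of_le hkn
  rw [Nat.add_sub_cancel_left] at h
  have hj : j.choose 2 ≤ (k + j).choose 2 := Nat.choose_le_choose 2 (Nat.le_add_left j k)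
  rcases Nat.eq_zero_or_pos (k + j) with h0 | hpos
  · simp_all
  have hq : (2 * f + m + j.choose 2 : ℚ) ≤ (k + j).choose 2 := by exact_mod_cast (by omega)
  have hkm' : (k : ℚ) ≤ 2 * m := by exact_mod_cast hkm
  rw [Nat.cast_choose_two, Nat.cast_choose_two] at hq
  suffices (4 * f : ℚ) ≤ ((k + j - 1 : ℕ) : ℚ) ^ 2 by exact_mod_cast this
  rw [Nat.cast_sub hpos]
  push_cast at hq ⊢
  nlinarith [sq_nonneg ((j : ℚ) - 1)]

theorem exists_eq_insert_of_card_eq_three {t : Finset V} (ht : #t = 3) {u w : V} (hu : u ∈ t)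
    (hw : w ∈ t) (huw : u ≠ w) : ∃ x, x ≠ u ∧ x ≠ w ∧ t = {x, u, w} := by
  obtain ⟨x, hx, rfl⟩ := (exists_eq_insert_iff (s := {u, w}) (t := t)).mpr
    ⟨by simp [insert_subset_iff, hu, hw], by rw [card_pair huw, ht]⟩
  simp only [mem_insert, mem_singleton, not_or] at hx
  exact ⟨x, hx.1, hx.2, rfl⟩

def IsCore (F : Finset (Finset V)) (T p : Finset V) : Prop :=
  p ⊆ T ∧ #p = 2 ∧ ∀ T' ∈ F, T' ≠ T → 1 < #(T ∩ T') → T ∩ T' ⊆ p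

theorem containsConfig_configC {u v x w : V} (huv : u ≠ v) (hux : u ≠ x) (huw : u ≠ w)
    (hvx : v ≠ x) (hvw : v ≠ w) (hxw : x ≠ w)
    (h₁ : {u, v, w} ∈ F) (h₂ : {u, x, w} ∈ F) (h₃ : {v, x, w} ∈ F) :
    containsConfig F configC := by
  refine ⟨![u, v, x, w], ?_, by simpa [configC] using ⟨h₁, h₂, h₃⟩⟩
  simp only [Matrix.vecCons, Fin.cons_injective_iff]
  simp [Function.Injective, huv, hux, huw, hvx, hvw, hxw]

theorem containsConfig_configD {u v w x y : V} (huv : u ≠ v) (huw : u ≠ w) (hux : u ≠ x)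
    (huy : u ≠ y) (hvw : v ≠ w) (hvx : v ≠ x) (hvy : v ≠ y) (hwx : w ≠ x) (hwy : w ≠ y)
    (hxy : x ≠ y) (h₁ : {u, v, w} ∈ F) (h₂ : {u, w, x} ∈ F) (h₃ : {v, w, y} ∈ F) :
    containsConfig F configD := by
  refine ⟨![u, v, w, x, y], ?_, by simpa [configD] using ⟨h₁, h₂, h₃⟩⟩
  simp only [Matrix.vecCons, Fin.cons_injective_iff]
  simp [Function.Injective, huv, huw, hux, huy, hvw, hvx, hvy, hwx, hwy, hxy]

theorem IsCore.false_of_shared_pairs {T p T₁ T₂ : Finset V} (hp : IsCore F T p)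
    (h₁ : T₁ ∈ F) (h₂ : T₂ ∈ F) (hT₁ : T₁ ≠ T) (hT₂ : T₂ ≠ T) {a b c : V}
    (hab : a ≠ b) (hac : a ≠ c) (hbc : b ≠ c) (ha : a ∈ T ∩ T₁) (hc₁ : c ∈ T ∩ T₁)
    (hb : b ∈ T ∩ T₂) (hc₂ : c ∈ T ∩ T₂) : False := by
  have hp₁ := hp.2.2 T₁ h₁ hT₁ (one_lt_card.mpr ⟨a, ha, c, hc₁, hac⟩)
  have hp₂ := hp.2.2 T₂ h₂ hT₂ (one_lt_card.mpr ⟨b, hb, c, hc₂, hbc⟩)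
  have : 2 < #p := two_lt_card.mpr ⟨a, hp₁ ha, b, hp₂ hb, c, hp₁ hc₁, hab, hac, hbc⟩
  exact this.ne' hp.2.1

theorem IsCore.eq_of_subset {T p q T' : Finset V} (hp : IsCore F T p) (hqT : q ⊆ T)
    (hq : #q = 2) (hqp : q ≠ p) (hT' : T' ∈ F) (hqT' : q ⊆ T') : T' = T := by
  by_contra hne
  have hsub : q ⊆ T ∩ T' := subset_inter hqT hqT'
  have hp' := hp.2.2 T' hT' hne (by have := card_le_card hsub; omega)
  exact hqp (eq_of_subset_of_card_le (hsub.trans hp') (by rw [hq, hp.2.1]))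

theorem not_containsConfig_configC_of_isCore (h : ∀ T ∈ F, ∃ p, IsCore F T p) :
    ¬ containsConfig F configC := by
  rintro ⟨f, hf, hfF⟩
  simp only [configC, List.mem_cons, List.not_mem_nil, or_false, forall_eq_or_imp,
    forall_eq, image_insert, image_singleton] at hfF
  obtain ⟨h₁, h₂, h₃⟩ := hfF
  obtain ⟨p, hp⟩ := h _ h₁
  exact hp.false_of_shared_pairs h₂ h₃
    (ne_of_mem_of_not_mem' (a := f 2) (by simp) (by simp [hf.eq_iff]))
    (ne_of_mem_of_not_mem' (a := f 2) (by simp) (by simp [hf.eq_iff]))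
    (a := f 0) (b := f 1) (c := f 3) (hf.ne (by decide)) (hf.ne (by decide))
    (hf.ne (by decide)) (by simp) (by simp) (by simp) (by simp)

theorem not_containsConfig_configD_of_isCore (h : ∀ T ∈ F, ∃ p, IsCore F T p) :
    ¬ containsConfig F configD := by
  rintro ⟨f, hf, hfF⟩
  simp only [configD, List.mem_cons, List.not_mem_nil, or_false, forall_eq_or_imp,
    forall_eq, image_insert, image_singleton] at hfF
  obtain ⟨h₁, h₂, h₃⟩ := hfF
  obtain ⟨p, hp⟩ := h _ h₁
  exact hp.false_of_shared_pairs h₂ h₃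
    (ne_of_mem_of_not_mem' (a := f 3) (by simp) (by simp [hf.eq_iff]))
    (ne_of_mem_of_not_mem' (a := f 4) (by simp) (by simp [hf.eq_iff]))
    (a := f 0) (b := f 1) (c := f 2) (hf.ne (by decide)) (hf.ne (by decide))
    (hf.ne (by decide)) (by simp) (by simp) (by simp) (by simp)

theorem card_inter_le_two (hF : isTripleSystem F) {T T' : Finset V} (hT : T ∈ F)
    (hT' : T' ∈ F) (hne : T' ≠ T) : #(T ∩ T') ≤ 2 := by
  by_contra! h
  have h₃ : #(T ∩ T') = 3 := le_antisymm (hF T hT ▸ card_le_card inter_subset_left) h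
  have hinter : T ∩ T' = T := eq_of_subset_of_card_le inter_subset_left (by rw [h₃, hF T hT])
  have hinter' : T ∩ T' = T' :=
    eq_of_subset_of_card_le inter_subset_right (by rw [h₃, hF T' hT'])
  exact hne (hinter'.symm.trans hinter)

theorem containsConfig_of_shared_pairs (hF : isTripleSystem F) {T T₁ T₂ : Finset V} (hT : T ∈ F)
    (h₁ : T₁ ∈ F) (h₂ : T₂ ∈ F) (hT₁ : T₁ ≠ T) (hT₂ : T₂ ≠ T) {a b c : V}
    (hab : a ≠ b) (hac : a ≠ c) (hbc : b ≠ c) (ha : a ∈ T ∩ T₁) (hc₁ : c ∈ T ∩ T₁)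
    (hb : b ∈ T ∩ T₂) (hc₂ : c ∈ T ∩ T₂) :
    containsConfig F configC ∨ containsConfig F configD := by
  rw [mem_inter] at ha hb hc₁ hc₂
  obtain ⟨x, hxa, hxc, rfl⟩ := exists_eq_insert_of_card_eq_three (hF _ h₁) ha.2 hc₁.2 hac
  obtain ⟨y, hyb, hyc, rfl⟩ := exists_eq_insert_of_card_eq_three (hF _ h₂) hb.2 hc₂.2 hbc
  obtain ⟨z, -, -, rfl⟩ := exists_eq_insert_of_card_eq_three (hF _ hT) ha.1 hc₁.1 hac
  obtain rfl : b = z := by simpa [hab.symm, hbc] using hb.1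
  have hxb : x ≠ b := by rintro rfl; exact hT₁ rfl
  have hya : y ≠ a := by rintro rfl; exact hT₂ (insert_comm _ _ _)
  rw [insert_comm] at hT
  by_cases hxy : x = y
  · subst hxy
    rw [insert_comm] at h₁ h₂
    exact .inl <| containsConfig_configC hab hxa.symm hac hxb.symm hbc hxc hT h₁ h₂
  · rw [insert_comm, pair_comm] at h₁ h₂
    exact .inr <| containsConfig_configD hab hac hxa.symm hya.symm hbc hxb.symm hyb.symm
      hxc.symm hyc.symm hxy hT h₁ h₂

theorem exists_isCore (hF : isTripleSystem F) (hC : ¬ containsConfig F configC)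
    (hD : ¬ containsConfig F configD) {T : Finset V} (hT : T ∈ F) : ∃ p, IsCore F T p := by
  by_cases hshared : ∃ T₁ ∈ F, T₁ ≠ T ∧ 1 < #(T ∩ T₁)
  · obtain ⟨T₁, h₁, hT₁, hcard₁⟩ := hshared
    refine ⟨T ∩ T₁, inter_subset_left,
      le_antisymm (card_inter_le_two hF hT h₁ hT₁) hcard₁, fun T₂ h₂ hT₂ hcard₂ => ?_⟩
    by_contra hsub
    obtain ⟨b, hb, hb₁⟩ := not_subset.mp hsub
    obtain ⟨c, hc⟩ := inter_nonempty_of_card_lt_card_add_card (inter_subset_left (s₂ := T₁))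
      (inter_subset_left (s₂ := T₂)) (by rw [hF T hT]; omega)
    rw [mem_inter] at hc
    obtain ⟨a, ha, hac⟩ := exists_mem_ne hcard₁ c
    exact (containsConfig_of_shared_pairs hF hT h₁ h₂ hT₁ hT₂ (ne_of_mem_of_not_mem ha hb₁) hac
      (ne_of_mem_of_not_mem hc.1 hb₁).symm ha hc.1 hb hc.2).elim hC hD
  · simp only [not_exists, not_and, not_lt] at hshared
    obtain ⟨p, hpT, hp⟩ := exists_subset_card_eq (s := T) (n := 2) (by rw [hF T hT]; omega)
    exact ⟨p, hpT, hp, fun T' hT' hne hcard => absurd hcard (hshared T' hT' hne).not_gt⟩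

section Counting

variable {core : Finset V → Finset V}

def nonCorePairs (F : Finset (Finset V)) (core : Finset V → Finset V) : Finset (Finset V) :=
  F.biUnion fun T => (T.powersetCard 2).erase (core T)

theorem mem_nonCorePairs {q : Finset V} :
    q ∈ nonCorePairs F core ↔ ∃ T ∈ F, q ≠ core T ∧ q ⊆ T ∧ #q = 2 := by
  simp [nonCorePairs]

theorem card_nonCorePairs (hF : isTripleSystem F) (hcore : ∀ T ∈ F, IsCore F T (core T)) :
    #(nonCorePairs F core) = 2 * #F := by
  rw [nonCorePairs, card_biUnion, sum_const_nat, mul_comm]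
  · intro T hT
    rw [card_erase_of_mem (mem_powersetCard.mpr ⟨(hcore T hT).1, (hcore T hT).2.1⟩),
      card_powersetCard, hF T hT]
    rfl
  · intro T hT T' hT' hne
    refine disjoint_left.mpr fun q hq hq' => ?_
    rw [mem_erase, mem_powersetCard] at hq hq'
    exact hne ((hcore T hT).eq_of_subset hq.2.1 hq.2.2 hq.1 hT' hq'.2.1).symm

theorem disjoint_nonCorePairs_image_core (hcore : ∀ T ∈ F, IsCore F T (core T)) :
    Disjoint (nonCorePairs F core) (F.image core) := by
  refine disjoint_left.mpr fun q hq hq' => ?_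
  obtain ⟨T, hT, hqT, hq⟩ := mem_nonCorePairs.mp hq
  obtain ⟨T', hT', rfl⟩ := mem_image.mp hq'
  obtain rfl := (hcore T hT).eq_of_subset hq.1 hq.2 hqT hT' (hcore T' hT').1
  exact hqT rfl

theorem card_biUnion_core_le (hcore : ∀ T ∈ F, IsCore F T (core T)) :
    #(F.biUnion core) ≤ 2 * #(F.image core) := by
  calc #(F.biUnion core) = #((F.image core).biUnion id) := by rw [image_biUnion]; rfl
    _ ≤ ∑ p ∈ F.image core, #p := card_biUnion_le
    _ ≤ #(F.image core) • 2 := sum_le_card_nsmul _ _ _ fun p hp => by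
        obtain ⟨T, hT, rfl⟩ := mem_image.mp hp
        exact (hcore T hT).2.1.le
    _ = 2 * #(F.image core) := by rw [smul_eq_mul, mul_comm]

theorem nonCorePairs_union_image_core_subset [Fintype V] (hF : isTripleSystem F)
    (hcore : ∀ T ∈ F, IsCore F T (core T)) :
    nonCorePairs F core ∪ F.image core ⊆
      univ.powersetCard 2 \ (univ \ F.biUnion core).powersetCard 2 := by
  suffices h : ∀ q, #q = 2 → ∀ T ∈ F, (q ∩ core T).Nonempty →
      q ∈ univ.powersetCard 2 \ (univ \ F.biUnion core).powersetCard 2 by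
    intro q hq
    rcases mem_union.mp hq with hq | hq
    · obtain ⟨T, hT, -, hqT, hq⟩ := mem_nonCorePairs.mp hq
      refine h q hq T hT (inter_nonempty_of_card_lt_card_add_card hqT (hcore T hT).1 ?_)
      rw [hF T hT, hq, (hcore T hT).2.1]
      decide
    · obtain ⟨T, hT, rfl⟩ := mem_image.mp hq
      refine h _ (hcore T hT).2.1 T hT ?_
      rw [inter_self, ← card_pos, (hcore T hT).2.1]
      decide
  rintro q hq T hT ⟨v, hv⟩
  rw [mem_inter] at hv
  simp only [mem_sdiff, mem_powersetCard, subset_univ, true_and, hq, and_true]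
  exact fun h => (mem_sdiff.mp (h hv.1)).2 (mem_biUnion.mpr ⟨T, hT, hv.2⟩)

theorem four_mul_card_le_of_isCore [Fintype V] (hF : isTripleSystem F)
    (hcore : ∀ T ∈ F, IsCore F T (core T)) : 4 * #F ≤ (Fintype.card V - 1) ^ 2 := by
  have hpairs := card_le_card (nonCorePairs_union_image_core_subset hF hcore)
  rw [card_union_of_disjoint (disjoint_nonCorePairs_image_core hcore),
    card_nonCorePairs hF hcore, card_sdiff_of_subset (powersetCard_mono (subset_univ _)),
    card_powersetCard, card_powersetCard, card_univ, card_sdiff_of_subset (subset_univ _),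
    card_univ] at hpairs
  exact four_mul_le_sq_of_le_choose_sub_choose (card_le_univ _) (card_biUnion_core_le hcore) hpairs

end Counting

theorem card_le_of_not_containsConfig [Fintype V] (hF : isTripleSystem F)
    (hC : ¬ containsConfig F configC) (hD : ¬ containsConfig F configD) :
    #F ≤ (Fintype.card V - 1) ^ 2 / 4 := by
  choose! core hcore using fun T (hT : T ∈ F) => exists_isCore hF hC hD hT
  rw [Nat.le_div_iff_mul_le four_pos, mul_comm]
  exact four_mul_card_le_of_isCore hF hcore

noncomputable def extremalTriple (n i c : ℕ) : Finset (Fin n) :=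
  ({2 * i, 2 * i + 1, c} : Finset ℕ).preimage Fin.val Fin.val_injective.injOn

noncomputable def extremalSystem (n : ℕ) : Finset (Finset (Fin n)) :=
  ((range n).sigma fun c => range (c / 2)).image fun x => extremalTriple n x.2 x.1

section Construction

variable {n i c : ℕ}

theorem mem_extremalTriple {v : Fin n} :
    v ∈ extremalTriple n i c ↔ (v : ℕ) = 2 * i ∨ (v : ℕ) = 2 * i + 1 ∨ (v : ℕ) = c := by
  simp [extremalTriple]

theorem mem_extremalSystem {T : Finset (Fin n)} :
    T ∈ extremalSystem n ↔ ∃ i c, 2 * i + 1 < c ∧ c < n ∧ extremalTriple n i c = T := by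
  simp only [extremalSystem, mem_image, mem_sigma, mem_range, Sigma.exists]
  constructor
  · rintro ⟨c, i, ⟨hc, hi⟩, rfl⟩
    exact ⟨i, c, by omega, hc, rfl⟩
  · rintro ⟨i, c, hi, hc, rfl⟩
    exact ⟨c, i, ⟨hc, by omega⟩, rfl⟩

theorem card_extremalTriple (hi : 2 * i + 1 < c) (hc : c < n) : #(extremalTriple n i c) = 3 := by
  rw [extremalTriple, card_preimage, filter_true_of_mem]
  · rw [card_eq_three]
    exact ⟨_, _, _, by omega, by omega, by omega, rfl⟩
  · intro a ha
    simp only [mem_insert, mem_singleton] at ha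
    simp only [Fin.range_val, Set.mem_Iio]
    omega

theorem extremalTriple_inj {i' c' : ℕ} (hi : 2 * i + 1 < c) (hc : c < n) (hi' : 2 * i' + 1 < c')
    (hc' : c' < n) (h : extremalTriple n i c = extremalTriple n i' c') : i = i' ∧ c = c' := by
  have key : ∀ v (hv : v < n), (v = 2 * i ∨ v = 2 * i + 1 ∨ v = c) ↔
      (v = 2 * i' ∨ v = 2 * i' + 1 ∨ v = c') := fun v hv => by
    simpa [mem_extremalTriple] using congrArg ((⟨v, hv⟩ : Fin n) ∈ ·) h
  have := (key c hc).mp (by omega)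
  have := (key (2 * i) (by omega)).mp (by omega)
  have := (key c' hc').mpr (by omega)
  omega

theorem isCore_extremalTriple (hi : 2 * i + 1 < c) (hc : c < n) :
    IsCore (extremalSystem n) (extremalTriple n i c) ((extremalTriple n i c).erase ⟨c, hc⟩) := by
  refine ⟨erase_subset _ _, ?_, fun T' hT' hne hcard x hx => ?_⟩
  · rw [card_erase_of_mem (mem_extremalTriple.mpr (by simp)), card_extremalTriple hi hc]
  obtain ⟨i', c', hi', hc', rfl⟩ := mem_extremalSystem.mp hT'
  obtain ⟨y, hy, hyx⟩ := exists_mem_ne hcard x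
  refine mem_erase.mpr ⟨?_, (mem_inter.mp hx).1⟩
  rintro rfl
  have hne' : ¬(i' = i ∧ c' = c) := by rintro ⟨rfl, rfl⟩; exact hne rfl
  have hyc : (y : ℕ) ≠ c := fun h => hyx (Fin.ext h)
  simp only [mem_inter, mem_extremalTriple] at hx hy
  omega

theorem isTripleSystem_extremalSystem : isTripleSystem (extremalSystem n) := by
  intro T hT
  obtain ⟨i, c, hi, hc, rfl⟩ := mem_extremalSystem.mp hT
  exact card_extremalTriple hi hc

theorem exists_isCore_extremalSystem {T : Finset (Fin n)} (hT : T ∈ extremalSystem n) :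
    ∃ p, IsCore (extremalSystem n) T p := by
  obtain ⟨i, c, hi, hc, rfl⟩ := mem_extremalSystem.mp hT
  exact ⟨_, isCore_extremalTriple hi hc⟩

theorem card_extremalSystem : #(extremalSystem n) = (n - 1) ^ 2 / 4 := by
  rw [extremalSystem, card_image_of_injOn, card_sigma, ← sum_range_div_two]
  · simp
  · rintro ⟨c, i⟩ hx ⟨c', i'⟩ hx' h
    simp only [coe_sigma, Set.mem_sigma_iff, coe_range, Set.mem_Iio] at hx hx' h
    obtain ⟨rfl, rfl⟩ := extremalTriple_inj (by omega) hx.1 (by omega) hx'.1 h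
    rfl

end Construction

theorem ex_CD_general (n : ℕ) :
    IsGreatest {k : ℕ | ∃ F : Finset (Finset (Fin n)), isTripleSystem F ∧
        ¬ containsConfig F configC ∧ ¬ containsConfig F configD ∧ F.card = k}
      ((n - 1) ^ 2 / 4) := by
  refine ⟨⟨extremalSystem n, isTripleSystem_extremalSystem,
    not_containsConfig_configC_of_isCore fun _ => exists_isCore_extremalSystem,
    not_containsConfig_configD_of_isCore fun _ => exists_isCore_extremalSystem,
    card_extremalSystem⟩, ?_⟩
  rintro k ⟨F, hF, hC, hD, rfl⟩
  simpa using card_le_of_not_containsConfig hF hC hD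

/-- ex(n, CD) = ((n-1)^2)/4 (floor) for every positive integer n. -/
theorem ex_CD (n : ℕ) (hn : 0 < n) :
    IsGreatest {k : ℕ | ∃ F : Finset (Finset (Fin n)), isTripleSystem F ∧
        ¬ containsConfig F configC ∧ ¬ containsConfig F configD ∧ F.card = k}
      ((n - 1) ^ 2 / 4) :=
  ex_CD_general n
end

section
/- Let G be a triangle-free simple graph on n vertices with at least ⌊(n−1)²/4⌋ edges. Then either (1) G is bipartite, and if G has strictly more than ⌊(n−1)²/4⌋ edges then no two vertices belonging to the same part of the bipartition are remote; or (2) G is non-bipartite, there are at most two (unordered) pairs of remote vertices, and if G has strictly more than ⌊(n−1)²/4⌋ edges then there are no remote pairs at all. -/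
/-- Two vertices are remote if their distance in G is greater than 2 (in particular,
vertices in different connected components are remote): they are distinct, non-adjacent,
and have no common neighbor. -/
def Remote {V : Type*} (G : SimpleGraph V) (x y : V) : Prop :=
  x ≠ y ∧ ¬ G.Adj x y ∧ ∀ z : V, ¬ (G.Adj x z ∧ G.Adj z y)


/-!
Write `q m = ⌊m² / 4⌋`. Deleting a vertex of minimum degree shows by induction that a
non-bipartite triangle-free graph on `m` vertices has at most `q (m - 1) + 1` edges: when the
rest is bipartite with sides `A`, `B`, the deleted vertex has neighbours on both sides, and its
`p` neighbours in `A` and `r` neighbours in `B` exclude `p * r` pairs of `A × B`. Deleting a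
remote pair `x`, `y` instead loses `d x + d y ≤ m - 3` edges (equality would make
`N x ∪ {y}` and `N y ∪ {x}` a bipartition), and the same count gives at most `q (m - 1)` edges;
so does a bipartite graph with `x`, `y` on the same side.

With exactly `q (n - 1)` edges and `G` non-bipartite, take a remote pair `x`, `y`. If `G - x - y`
is bipartite, equality in the count pins down `G` so tightly that its only remote pairs are
`{x, y}` and `{y, β}` for the unique neighbour `β` of `x` on one side. Otherwise `G - x - y` is
extremal for the first bound, so `d x + d y = n - 3` and every remote pair meets `{x, y}`. Three
pairwise meeting remote pairs form a triangle or a star, and both are ruled out by counting the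
`n - 1 - d c` vertices at distance at least two from a vertex `c` of the configuration.
-/

open Finset

theorem sq_succ_div_four (m : ℕ) : (m + 1) ^ 2 / 4 = m ^ 2 / 4 + (m + 1) / 2 := by
  rcases Nat.even_or_odd' m with ⟨k, rfl | rfl⟩
  · rw [show (2 * k + 1) ^ 2 = 4 * (k * k + k) + 1 by ring, show (2 * k) ^ 2 = 4 * (k * k) by ring]
    omega
  · rw [show (2 * k + 1 + 1) ^ 2 = 4 * ((k + 1) * (k + 1)) by ring,
      show (2 * k + 1) ^ 2 = 4 * (k * k + k) + 1 by ring]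
    have : (k + 1) * (k + 1) = k * k + k + (k + 1) := by ring
    omega

theorem mul_le_sq_div_four (a b : ℕ) : a * b ≤ (a + b) ^ 2 / 4 :=
  (Nat.le_div_iff_mul_le (by norm_num)).2 (by nlinarith [sq_nonneg ((a : ℤ) - b)])

theorem add_le_mul_add_one {p r : ℕ} (hp : 1 ≤ p) (hr : 1 ≤ r) : p + r ≤ p * r + 1 := by
  nlinarith

theorem mul_add_lt_sq_div_four {a b p r p' r' : ℕ} (hp : 1 ≤ p) (hr : 1 ≤ r) (hp' : 1 ≤ p')
    (hr' : 1 ≤ r') (hlt : p + r + p' + r' < a + b) :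
    a * b + p + r + p' + r' < (a + b + 1) ^ 2 / 4 + p * r + p' * r' := by
  have := add_le_mul_add_one hp hr
  have := add_le_mul_add_one hp' hr'
  have := mul_le_sq_div_four a b
  have := sq_succ_div_four (a + b)
  omega

theorem mul_add_le_sq_div_four {a b p r p' r' : ℕ} (hp : 1 ≤ p) (hr : 1 ≤ r) (ha : p + p' ≤ a)
    (hb : r + r' ≤ b) (hlt : p + r + p' + r' < a + b) :
    a * b + p + r + p' + r' ≤ (a + b + 1) ^ 2 / 4 + p * r + p' * r' := by
  have := add_le_mul_add_one hp hr
  rcases Nat.eq_zero_or_pos p' with rfl | hp'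
  · have := mul_le_sq_div_four b (a + 1)
    rw [show b + (a + 1) = a + b + 1 by ring, show b * (a + 1) = a * b + b by ring] at this
    omega
  rcases Nat.eq_zero_or_pos r' with rfl | hr'
  · have := mul_le_sq_div_four a (b + 1)
    rw [show a + (b + 1) = a + b + 1 by ring, show a * (b + 1) = a * b + a by ring] at this
    omega
  exact (mul_add_lt_sq_div_four hp hr hp' hr' hlt).le

theorem card_sdiff_pair_add_two {V : Type*} [DecidableEq V] {s : Finset V} {x y : V}
    (hx : x ∈ s) (hy : y ∈ s) (hxy : x ≠ y) : #(s \ {x, y}) + 2 = #s := by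
  have hsub : {x, y} ⊆ s := insert_subset hx (singleton_subset_iff.2 hy)
  have := card_le_card hsub
  rw [card_pair hxy] at this
  rw [card_sdiff_of_subset hsub, card_pair hxy]
  omega

section Sym2

variable {V : Type*}

theorem ncard_setOf_sym2_le_two {r : V → V → Prop} (e₁ e₂ : Sym2 V)
    (h : ∀ u v, r u v → s(u, v) = e₁ ∨ s(u, v) = e₂) :
    {e : Sym2 V | ∃ u v, e = s(u, v) ∧ r u v}.ncard ≤ 2 := by
  calc _ ≤ ({e₁, e₂} : Set (Sym2 V)).ncard :=
        Set.ncard_le_ncard (by rintro _ ⟨u, v, rfl, huv⟩; simpa using h u v huv)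
    _ ≤ 2 := (Set.ncard_insert_le _ _).trans (by simp)

theorem ncard_setOf_sym2_le_two_of_meet [Finite V] {r : V → V → Prop}
    (hsymm : ∀ x y, r x y → r y x) (hirr : ∀ x, ¬ r x x)
    (hmeet : ∀ x y x' y', r x y → r x' y' → x' = x ∨ x' = y ∨ y' = x ∨ y' = y)
    (hstar : ∀ c y z w, r c y → r c z → r c w → y = z ∨ y = w ∨ z = w)
    (htri : ∀ x y z, r x y → r x z → ¬ r y z) :
    {e : Sym2 V | ∃ u v, e = s(u, v) ∧ r u v}.ncard ≤ 2 := by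
  by_contra! hlt
  obtain ⟨_, ⟨x, y, rfl, hxy⟩, _, ⟨x₂, y₂, rfl, h₂⟩, _, ⟨x₃, y₃, rfl, h₃⟩, h₁₂, h₁₃, h₂₃⟩ :=
    (Set.two_lt_ncard (Set.toFinite _)).1 hlt
  have hnorm : ∀ {u v}, r u v →
      (∃ a, s(u, v) = s(x, a) ∧ r x a) ∨ ∃ a, s(u, v) = s(y, a) ∧ r y a := by
    intro u v huv
    rcases hmeet x y u v hxy huv with rfl | rfl | rfl | rfl
    exacts [.inl ⟨v, rfl, huv⟩, .inr ⟨v, rfl, huv⟩, .inl ⟨u, Sym2.eq_swap, hsymm _ _ huv⟩,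
      .inr ⟨u, Sym2.eq_swap, hsymm _ _ huv⟩]
  rcases hnorm h₂ with ⟨a, ha, hra⟩ | ⟨a, ha, hra⟩ <;>
    rcases hnorm h₃ with ⟨b, hb, hrb⟩ | ⟨b, hb, hrb⟩ <;>
    rw [ha] at h₁₂ h₂₃ <;> rw [hb] at h₁₃ h₂₃
  · rcases hstar x y a b hxy hra hrb with rfl | rfl | rfl <;> simp_all
  · rcases hmeet x a y b hra hrb with rfl | rfl | rfl | rfl
    exacts [hirr _ hxy, h₁₂ rfl, h₁₃ Sym2.eq_swap, htri x y _ hxy hra hrb]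
  · rcases hmeet x b y a hrb hra with rfl | rfl | rfl | rfl
    exacts [hirr _ hxy, h₁₃ rfl, h₁₂ Sym2.eq_swap, htri x y _ hxy hrb hra]
  · rcases hstar y x a b (hsymm _ _ hxy) hra hrb with rfl | rfl | rfl
    exacts [h₁₂ Sym2.eq_swap, h₁₃ Sym2.eq_swap, h₂₃ rfl]

end Sym2

namespace SimpleGraph

variable {V : Type*} {G : SimpleGraph V}

theorem IsIndepSet.union {s t : Set V} (hs : G.IsIndepSet s) (ht : G.IsIndepSet t)
    (hst : ∀ a ∈ s, ∀ b ∈ t, ¬ G.Adj a b) : G.IsIndepSet (s ∪ t) := by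
  rintro a (ha | ha) b (hb | hb) hab
  exacts [hs ha hb hab, hst a ha b hb, fun h => hst b hb a ha h.symm, ht ha hb hab]

theorem IsIndepSet.interedges_eq_empty [DecidableRel G.Adj] {s : Finset V}
    (hs : G.IsIndepSet s) : G.interedges s s = ∅ := by
  ext ⟨a, b⟩
  simp only [mem_interedges_iff, notMem_empty, iff_false, not_and]
  exact fun ha hb hab => hs ha hb hab.ne hab

theorem mem_iff_notMem_of_adj {A B : Finset V} (hcov : ∀ v, v ∈ A ∨ v ∈ B)
    (hA : G.IsIndepSet A) (hB : G.IsIndepSet B) {x y : V} (h : G.Adj x y) : x ∈ A ↔ y ∉ A := by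
  refine ⟨fun hx hy => hA hx hy h.ne h, fun hy => ?_⟩
  by_contra hx
  exact hB ((hcov x).resolve_left hx) ((hcov y).resolve_left hy) h.ne h

section Finite

variable [Fintype V] [DecidableRel G.Adj]

theorem card_interedges_univ : #(G.interedges univ univ) = 2 * #G.edgeFinset := by
  rw [two_mul_card_edgeFinset, interedges_def, univ_product_univ]

theorem isIndepSet_neighborFinset (hG : G.CliqueFree 3) (v : V) :
    G.IsIndepSet (G.neighborFinset v : Set V) := by
  rw [coe_neighborFinset]
  exact isIndepSet_neighborSet_of_triangleFree G hG v

theorem disjoint_neighborFinset_of_adj (hG : G.CliqueFree 3) {u v : V} (huv : G.Adj u v) :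
    Disjoint (G.neighborFinset u) (G.neighborFinset v) := by
  refine Finset.disjoint_left.2 fun w hwu hwv => ?_
  rw [mem_neighborFinset] at hwu hwv
  exact isIndepSet_neighborFinset hG w (by simpa using hwu.symm) (by simpa using hwv.symm)
    huv.ne huv

end Finite

variable [DecidableEq V]

def IsBipartiteOn (G : SimpleGraph V) (s : Finset V) : Prop :=
  ∃ A B : Finset V, Disjoint A B ∧ A ∪ B = s ∧ G.IsIndepSet A ∧ G.IsIndepSet B

theorem isBipartiteOn_of_subset_union {s I J : Finset V} (hI : G.IsIndepSet I)
    (hJ : G.IsIndepSet J) (hs : s ⊆ I ∪ J) : G.IsBipartiteOn s := by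
  refine ⟨s ∩ I, s \ I, (disjoint_sdiff_inter s I).symm, by rw [union_comm, sdiff_union_inter],
    hI.mono (by simp), hJ.mono fun v hv => ?_⟩
  simp only [coe_sdiff, Set.mem_sdiff, mem_coe] at hv
  simpa [hv.2] using hs hv.1

theorem isBipartiteOn_of_card_le {s I J : Finset V} (hI : I ⊆ s) (hJ : J ⊆ s)
    (hIJ : Disjoint I J) (hIi : G.IsIndepSet I) (hJi : G.IsIndepSet J) (h : #s ≤ #I + #J) :
    G.IsBipartiteOn s :=
  isBipartiteOn_of_subset_union hIi hJi
    (eq_of_subset_of_card_le (union_subset hI hJ) (by rwa [card_union_of_disjoint hIJ])).ge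

theorem isBipartiteOn_univ_of_forall_adj [Fintype V] (P : Set V)
    (hP : ∀ x y, G.Adj x y → (x ∈ P ↔ y ∉ P)) : G.IsBipartiteOn univ := by
  classical
  refine isBipartiteOn_of_subset_union (I := {v | v ∈ P}) (J := {v | v ∉ P}) ?_ ?_
    fun v _ => by by_cases hv : v ∈ P <;> simp [hv]
  · intro a ha b hb _ hab
    simp only [coe_filter, mem_univ, true_and, Set.mem_ofPred_eq] at ha hb
    exact (hP a b hab).1 ha hb
  · intro a ha b hb _ hab
    simp only [coe_filter, mem_univ, true_and, Set.mem_ofPred_eq] at ha hb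
    exact ha ((hP a b hab).2 hb)

variable [DecidableRel G.Adj]

theorem card_interedges_union {s t : Finset V} (h : Disjoint s t) :
    #(G.interedges (s ∪ t) (s ∪ t)) =
      #(G.interedges s s) + 2 * #(G.interedges s t) + #(G.interedges t t) := by
  have hl : ∀ u, G.interedges (s ∪ t) u = G.interedges s u ∪ G.interedges t u := fun u => by
    ext; simp only [mem_interedges_iff, mem_union]; tauto
  have hr : ∀ u, G.interedges u (s ∪ t) = G.interedges u s ∪ G.interedges u t := fun u => by
    ext; simp only [mem_interedges_iff, mem_union]; tauto
  have hts : #(G.interedges t s) = #(G.interedges s t) :=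
    have := G.symm
    Rel.card_interedges_comm (r := G.Adj) t s
  rw [hl, card_union_of_disjoint (G.interedges_disjoint_left h _), hr, hr,
    card_union_of_disjoint (G.interedges_disjoint_right _ h),
    card_union_of_disjoint (G.interedges_disjoint_right _ h), hts]
  ring

theorem card_interedges_union_add_card_compl {A B : Finset V} (hAB : Disjoint A B)
    (hA : G.IsIndepSet A) (hB : G.IsIndepSet B) :
    #(G.interedges (A ∪ B) (A ∪ B)) + 2 * #(Gᶜ.interedges A B) = 2 * (#A * #B) := by
  rw [card_interedges_union hAB, hA.interedges_eq_empty, hB.interedges_eq_empty,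
    ← G.card_interedges_add_card_interedges_compl hAB, card_empty]
  ring

variable [Fintype V]

theorem product_subset_compl_interedges (hG : G.CliqueFree 3) {A B : Finset V}
    (hAB : Disjoint A B) (v : V) :
    (G.neighborFinset v ∩ A) ×ˢ (G.neighborFinset v ∩ B) ⊆ Gᶜ.interedges A B := by
  rintro ⟨a, b⟩ h
  simp only [mem_product, mem_inter] at h
  have hab : a ≠ b := hAB.forall_ne_finset h.1.2 h.2.2
  exact Gᶜ.mk_mem_interedges_iff.2 ⟨h.1.2, h.2.2,
    (compl_adj ..).2 ⟨hab, isIndepSet_neighborFinset hG v h.1.1 h.2.1 hab⟩⟩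

theorem card_interedges_singleton (s : Finset V) (v : V) :
    #(G.interedges s {v}) = #(G.neighborFinset v ∩ s) := by
  refine card_bij' (fun p _ => p.1) (fun a _ => (a, v)) ?_ ?_ ?_ ?_
  · intro p hp
    rw [G.mem_interedges_iff, mem_singleton] at hp
    simpa [hp.2.1, hp.1] using hp.2.2.symm
  · intro a ha
    rw [mem_inter, mem_neighborFinset] at ha
    exact G.mk_mem_interedges_iff.2 ⟨ha.2, mem_singleton_self v, ha.1.symm⟩
  · intro p hp
    rw [G.mem_interedges_iff, mem_singleton] at hp
    exact Prod.ext rfl hp.2.1.symm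
  · intro a _
    rfl

theorem neighborFinset_inter_sdiff {s T : Finset V} {v : V}
    (h : Disjoint (G.neighborFinset v) T) :
    G.neighborFinset v ∩ (s \ T) = G.neighborFinset v ∩ s := by
  rw [← inter_sdiff_assoc, sdiff_eq_self_of_disjoint (h.mono_left inter_subset_left)]

theorem neighborFinset_inter_erase (s : Finset V) (v : V) :
    G.neighborFinset v ∩ s.erase v = G.neighborFinset v ∩ s := by
  rw [← sdiff_singleton_eq_erase,
    neighborFinset_inter_sdiff (disjoint_singleton_right.2 (G.notMem_neighborFinset_self v))]

theorem card_interedges_erase {s : Finset V} {v : V} (hv : v ∈ s) :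
    #(G.interedges s s) =
      #(G.interedges (s.erase v) (s.erase v)) + 2 * #(G.neighborFinset v ∩ s) := by
  conv_lhs => rw [← insert_erase hv, insert_eq, union_comm]
  rw [card_interedges_union (disjoint_singleton_right.2 (notMem_erase v s)),
    card_interedges_singleton, neighborFinset_inter_erase,
    IsIndepSet.interedges_eq_empty (s := {v}) (by simp), card_empty, add_zero]

theorem card_neighborFinset_inter_eq_add {s T A B : Finset V} {v : V} (hAB : Disjoint A B)
    (hcov : A ∪ B = s \ T) (hv : Disjoint (G.neighborFinset v) T) :
    #(G.neighborFinset v ∩ s) = #(G.neighborFinset v ∩ A) + #(G.neighborFinset v ∩ B) := by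
  rw [← neighborFinset_inter_sdiff hv, ← hcov, inter_union_distrib_left,
    card_union_of_disjoint (hAB.mono inter_subset_right inter_subset_right)]

theorem card_neighborFinset_inter_eq_add_of_erase {s A B : Finset V} {v : V}
    (hAB : Disjoint A B) (hcov : A ∪ B = s.erase v) :
    #(G.neighborFinset v ∩ s) = #(G.neighborFinset v ∩ A) + #(G.neighborFinset v ∩ B) :=
  card_neighborFinset_inter_eq_add hAB (by rw [hcov, sdiff_singleton_eq_erase])
    (disjoint_singleton_right.2 (G.notMem_neighborFinset_self v))

theorem card_neighborFinset_inter_add_lt (hG : G.CliqueFree 3) {s : Finset V}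
    (hs : ¬ G.IsBipartiteOn s) {u v : V} (huv : G.Adj u v) :
    #(G.neighborFinset u ∩ s) + #(G.neighborFinset v ∩ s) < #s := by
  by_contra! h
  exact hs (isBipartiteOn_of_card_le inter_subset_right inter_subset_right
    ((disjoint_neighborFinset_of_adj hG huv).mono inter_subset_left inter_subset_left)
    ((isIndepSet_neighborFinset hG u).mono (by simp))
    ((isIndepSet_neighborFinset hG v).mono (by simp)) h)

theorem exists_two_mul_card_neighborFinset_inter_lt (hG : G.CliqueFree 3) {s : Finset V}
    (hs : ¬ G.IsBipartiteOn s) : ∃ v ∈ s, 2 * #(G.neighborFinset v ∩ s) < #s := by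
  obtain ⟨u, hu, v, hv, huv⟩ : ∃ u ∈ s, ∃ v ∈ s, G.Adj u v := by
    by_contra! h
    exact hs (isBipartiteOn_of_subset_union (I := s) (J := ∅)
      (fun a ha b hb _ => h a ha b hb) (by simp) (by simp))
  have := card_neighborFinset_inter_add_lt hG hs huv
  rcases le_total #(G.neighborFinset u ∩ s) #(G.neighborFinset v ∩ s) with h | h
  exacts [⟨u, hu, by omega⟩, ⟨v, hv, by omega⟩]

theorem exists_nonempty_nonempty_of_not_isBipartiteOn {s T A B : Finset V}
    (hs : ¬ G.IsBipartiteOn s) (hT : G.IsIndepSet T) (hAB : A ∪ B = s \ T)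
    (hA : G.IsIndepSet A) (hB : G.IsIndepSet B) :
    ∃ t ∈ T, (G.neighborFinset t ∩ A).Nonempty ∧ (G.neighborFinset t ∩ B).Nonempty := by
  by_contra! h
  -- The vertices of `T` seeing `A` join `B`, the others join `A`.
  set T₁ := {t ∈ T | ∃ a ∈ A, G.Adj t a}
  have hT₁ : T₁ ⊆ T := filter_subset _ _
  refine hs (isBipartiteOn_of_subset_union (I := A ∪ (T \ T₁)) (J := B ∪ T₁) ?_ ?_ ?_)
  · rw [coe_union]
    refine hA.union (hT.mono (by simp)) fun a ha t ht hat => ?_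
    simp only [coe_sdiff, Set.mem_sdiff, mem_coe, T₁, mem_filter, not_and, not_exists] at ht
    exact ht.2 ht.1 a ha hat.symm
  · rw [coe_union]
    refine hB.union (hT.mono (by simpa using hT₁)) fun b hb t ht hbt => ?_
    simp only [mem_coe, T₁, mem_filter] at ht
    obtain ⟨a, ha, hta⟩ := ht.2
    exact Finset.Nonempty.ne_empty ⟨b, mem_inter.2 ⟨(G.mem_neighborFinset _ _).2 hbt.symm, hb⟩⟩
      (h t ht.1 ⟨a, mem_inter.2 ⟨(G.mem_neighborFinset _ _).2 hta, ha⟩⟩)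
  · intro v hv
    by_cases hvT : v ∈ T
    · by_cases hv₁ : v ∈ T₁ <;> simp [hvT, hv₁]
    · have : v ∈ A ∪ B := hAB ▸ mem_sdiff.2 ⟨hv, hvT⟩
      rw [mem_union] at this
      rw [mem_union, mem_union, mem_union]
      tauto

theorem nonempty_nonempty_of_not_isBipartiteOn_erase {s A B : Finset V} {v : V}
    (hs : ¬ G.IsBipartiteOn s) (hAB : A ∪ B = s.erase v)
    (hA : G.IsIndepSet A) (hB : G.IsIndepSet B) :
    (G.neighborFinset v ∩ A).Nonempty ∧ (G.neighborFinset v ∩ B).Nonempty := by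
  obtain ⟨t, ht, h⟩ := exists_nonempty_nonempty_of_not_isBipartiteOn (T := {v}) hs (by simp)
    (by rwa [sdiff_singleton_eq_erase]) hA hB
  rwa [mem_singleton.1 ht] at h

theorem five_le_card_of_not_isBipartiteOn (hG : G.CliqueFree 3) {s : Finset V}
    (hs : ¬ G.IsBipartiteOn s) : 5 ≤ #s := by
  induction s using Finset.strongInduction with
  | H s ih =>
  obtain ⟨v, hv, hdeg⟩ := exists_two_mul_card_neighborFinset_inter_lt hG hs
  have hcard := card_erase_add_one hv
  by_cases hbip : G.IsBipartiteOn (s.erase v)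
  · obtain ⟨A, B, hAB, hcov, hA, hB⟩ := hbip
    obtain ⟨hpA, hpB⟩ := nonempty_nonempty_of_not_isBipartiteOn_erase hs hcov hA hB
    have := card_neighborFinset_inter_eq_add_of_erase (G := G) hAB hcov
    have := hpA.card_pos
    have := hpB.card_pos
    omega
  · have := ih _ (erase_ssubset hv) hbip
    omega

-- `G.interedges s s` consists of ordered pairs, so it counts every edge inside `s` twice.
theorem card_interedges_le_of_not_isBipartiteOn (hG : G.CliqueFree 3) {s : Finset V}
    (hs : ¬ G.IsBipartiteOn s) : #(G.interedges s s) ≤ 2 * ((#s - 1) ^ 2 / 4 + 1) := by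
  induction s using Finset.strongInduction with
  | H s ih =>
  obtain ⟨v, hv, hdeg⟩ := exists_two_mul_card_neighborFinset_inter_lt hG hs
  have hcard := card_erase_add_one hv
  have h5 := five_le_card_of_not_isBipartiteOn hG hs
  rw [card_interedges_erase hv]
  by_cases hbip : G.IsBipartiteOn (s.erase v)
  · obtain ⟨A, B, hAB, hcov, hA, hB⟩ := hbip
    obtain ⟨hpA, hpB⟩ := nonempty_nonempty_of_not_isBipartiteOn_erase hs hcov hA hB
    have hd := card_neighborFinset_inter_eq_add_of_erase (G := G) hAB hcov
    have hcount := card_interedges_union_add_card_compl hAB hA hB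
    have hM := card_le_card (product_subset_compl_interedges hG hAB v)
    have hpr := add_le_mul_add_one hpA.card_pos hpB.card_pos
    have hq := mul_le_sq_div_four #A #B
    rw [card_product] at hM
    rw [← card_union_of_disjoint hAB, hcov] at hq
    rw [hcov] at hcount
    rw [show #s - 1 = #(s.erase v) by omega]
    omega
  · have := ih _ (erase_ssubset hv) hbip
    have := sq_succ_div_four (#s - 2)
    rw [show #s - 2 + 1 = #s - 1 by omega] at this
    rw [show #(s.erase v) - 1 = #s - 2 by omega] at *
    omega

theorem exists_adj_of_le_card_interedges (hG : G.CliqueFree 3)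
    (hnb : ¬ G.IsBipartiteOn univ)
    (hq : 2 * ((Fintype.card V - 1) ^ 2 / 4) ≤ #(G.interedges univ univ)) (v : V) :
    ∃ w, G.Adj v w := by
  by_contra! hv
  have hN : G.neighborFinset v = ∅ := eq_empty_of_forall_notMem fun w => by simp [hv w]
  have hnb' : ¬ G.IsBipartiteOn (univ.erase v) := fun ⟨A, B, _, hcov, hA, hB⟩ => by
    obtain ⟨⟨w, hw⟩, -⟩ := nonempty_nonempty_of_not_isBipartiteOn_erase hnb hcov hA hB
    simp [hN] at hw
  have h5 := five_le_card_of_not_isBipartiteOn hG hnb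
  have hA := card_interedges_le_of_not_isBipartiteOn hG hnb'
  have he := card_interedges_erase (G := G) (mem_univ v)
  have hstep := sq_succ_div_four (Fintype.card V - 2)
  rw [hN, empty_inter, card_empty] at he
  rw [card_erase_of_mem (mem_univ v)] at hA
  rw [card_univ] at h5 hA
  rw [show Fintype.card V - 2 + 1 = Fintype.card V - 1 by omega] at hstep
  rw [show Fintype.card V - 1 - 1 = Fintype.card V - 2 by omega] at hA
  omega

theorem card_compl_insert_neighborFinset (c : V) :
    #(insert c (G.neighborFinset c))ᶜ + G.degree c + 1 = Fintype.card V := by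
  have := card_le_univ (insert c (G.neighborFinset c))
  rw [card_insert_of_notMem (G.notMem_neighborFinset_self c),
    card_neighborFinset_eq_degree] at this
  rw [card_compl, card_insert_of_notMem (G.notMem_neighborFinset_self c),
    card_neighborFinset_eq_degree]
  omega

end SimpleGraph

section Remote

open SimpleGraph

variable {V : Type*} {G : SimpleGraph V} {x y : V}

theorem Remote.symm (h : Remote G x y) : Remote G y x :=
  ⟨h.1.symm, fun h' => h.2.1 h'.symm, fun z hz => h.2.2 z ⟨hz.2.symm, hz.1.symm⟩⟩

theorem Remote.not_adj_of_adj {z : V} (h : Remote G x y) (hz : G.Adj x z) : ¬ G.Adj y z :=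
  fun h' => h.2.2 z ⟨hz, h'.symm⟩

theorem not_remote_of_adj_of_adj {u v w : V} (hu : G.Adj u w) (hv : G.Adj v w) :
    ¬ Remote G u v :=
  fun h => h.not_adj_of_adj hu hv

theorem Remote.isIndepSet_pair [DecidableEq V] (h : Remote G x y) :
    G.IsIndepSet ({x, y} : Finset V) := by
  rw [coe_pair]
  rintro a (rfl | rfl) b (rfl | rfl) hab hadj
  exacts [hab rfl, h.2.1 hadj, h.2.1 hadj.symm, hab rfl]

theorem remote_eq_or_eq_of_forall_adj {A B : Finset V} {β α₀ α₁ w₀ u v : V}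
    (hcov : ∀ t, t = x ∨ t = y ∨ t ∈ A ∨ t ∈ B)
    (hAB : ∀ a ∈ A, ∀ b ∈ B, G.Adj a b ∨ (G.Adj x a ∧ b = β))
    (hyB : ∀ b ∈ B, b ≠ β → G.Adj y b) (hβ : β ∈ B) (hxβ : G.Adj x β)
    (hα₀ : α₀ ∈ A) (hxα₀ : G.Adj x α₀) (hα₁ : α₁ ∈ A) (hxα₁ : ¬ G.Adj x α₁)
    (hw₀ : w₀ ∈ B) (hw₀β : w₀ ≠ β) (huv : Remote G u v) :
    s(u, v) = s(x, y) ∨ s(u, v) = s(y, β) := by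
  have hAB' : ∀ a ∈ A, ∀ b ∈ B, b ≠ β → G.Adj a b := fun a ha b hb hbβ =>
    (hAB a ha b hb).resolve_right fun h => hbβ h.2
  have hα₁B : ∀ b ∈ B, G.Adj α₁ b := fun b hb =>
    (hAB α₁ hα₁ b hb).resolve_right fun h => hxα₁ h.1
  have hxA : ∀ a ∈ A, ¬ Remote G x a := fun a ha h => by
    rcases hAB a ha β hβ with haβ | hxa
    exacts [not_remote_of_adj_of_adj hxβ haβ h, h.2.1 hxa.1]
  have hxB : ∀ b ∈ B, ¬ Remote G x b := fun b hb h => by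
    by_cases hbβ : b = β
    exacts [h.2.1 (hbβ ▸ hxβ), not_remote_of_adj_of_adj hxα₀ (hAB' α₀ hα₀ b hb hbβ).symm h]
  have hyA : ∀ a ∈ A, ¬ Remote G y a := fun a ha =>
    not_remote_of_adj_of_adj (hyB w₀ hw₀ hw₀β) (hAB' a ha w₀ hw₀ hw₀β)
  have hyB' : ∀ b ∈ B, Remote G y b → b = β := fun b hb h => by
    by_contra hbβ
    exact h.2.1 (hyB b hb hbβ)
  have hAA : ∀ a ∈ A, ∀ a' ∈ A, ¬ Remote G a a' := fun a ha a' ha' =>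
    not_remote_of_adj_of_adj (hAB' a ha w₀ hw₀ hw₀β) (hAB' a' ha' w₀ hw₀ hw₀β)
  have hBB : ∀ b ∈ B, ∀ b' ∈ B, ¬ Remote G b b' := fun b hb b' hb' =>
    not_remote_of_adj_of_adj (hα₁B b hb).symm (hα₁B b' hb').symm
  have hAB'' : ∀ a ∈ A, ∀ b ∈ B, ¬ Remote G a b := fun a ha b hb h => by
    rcases hAB a ha b hb with hab | ⟨hxa, rfl⟩
    exacts [h.2.1 hab, not_remote_of_adj_of_adj hxa.symm hxβ.symm h]
  rcases hcov u with rfl | rfl | hu | hu <;> rcases hcov v with rfl | rfl | hv | hv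
  · exact absurd rfl huv.1
  · exact .inl rfl
  · exact absurd huv (hxA _ hv)
  · exact absurd huv (hxB _ hv)
  · exact .inl Sym2.eq_swap
  · exact absurd rfl huv.1
  · exact absurd huv (hyA _ hv)
  · exact .inr (by rw [hyB' _ hv huv])
  · exact absurd huv.symm (hxA _ hu)
  · exact absurd huv.symm (hyA _ hu)
  · exact absurd huv (hAA _ hu _ hv)
  · exact absurd huv (hAB'' _ hu _ hv)
  · exact absurd huv.symm (hxB _ hu)
  · exact .inr (by rw [hyB' _ hu huv.symm, Sym2.eq_swap])
  · exact absurd huv.symm (hAB'' _ hv _ hu)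
  · exact absurd huv (hBB _ hu _ hv)

variable [Fintype V] [DecidableRel G.Adj]

theorem Remote.disjoint_neighborFinset (h : Remote G x y) :
    Disjoint (G.neighborFinset x) (G.neighborFinset y) :=
  Finset.disjoint_left.2 fun _ hx hy =>
    h.not_adj_of_adj ((G.mem_neighborFinset _ _).1 hx) ((G.mem_neighborFinset _ _).1 hy)

theorem Remote.isIndepSet_insert (hG : G.CliqueFree 3) (h : Remote G x y) :
    G.IsIndepSet (insert y (G.neighborFinset x : Set V)) := by
  rw [Set.insert_eq]
  refine IsIndepSet.union (Set.pairwise_singleton _ _) (isIndepSet_neighborFinset hG x)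
    fun a ha b hb => ?_
  rw [Set.mem_singleton_iff.1 ha]
  exact h.not_adj_of_adj (by simpa using hb)

variable [DecidableEq V]

theorem Remote.disjoint_neighborFinset_pair (h : Remote G x y) :
    Disjoint (G.neighborFinset x) {x, y} := by
  simp [h.2.1]

theorem Remote.card_inter_add_card_inter_le (h : Remote G x y) (A : Finset V) :
    #(G.neighborFinset x ∩ A) + #(G.neighborFinset y ∩ A) ≤ #A := by
  rw [← card_union_of_disjoint (h.disjoint_neighborFinset.mono inter_subset_left
    inter_subset_left)]
  exact card_le_card (union_subset inter_subset_right inter_subset_right)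

theorem Remote.card_neighborFinset_inter_add_lt (hG : G.CliqueFree 3) {s : Finset V}
    (hs : ¬ G.IsBipartiteOn s) (hx : x ∈ s) (hy : y ∈ s) (h : Remote G x y) :
    #(G.neighborFinset x ∩ s) + #(G.neighborFinset y ∩ s) + 2 < #s := by
  by_contra! hle
  have hyx : y ∉ G.neighborFinset x ∩ s := by simp [h.2.1]
  have hxy : x ∉ G.neighborFinset y ∩ s := by simp [h.symm.2.1]
  refine hs (isBipartiteOn_of_card_le (I := insert y (G.neighborFinset x ∩ s))
    (J := insert x (G.neighborFinset y ∩ s)) (insert_subset hy inter_subset_right)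
    (insert_subset hx inter_subset_right) ?_ ((h.isIndepSet_insert hG).mono ?_)
    ((h.symm.isIndepSet_insert hG).mono ?_) ?_)
  · rw [Finset.disjoint_left]
    intro a ha hb
    simp only [mem_insert, mem_inter, mem_neighborFinset] at ha hb
    rcases ha with rfl | ⟨ha, -⟩ <;> rcases hb with rfl | ⟨hb, -⟩
    exacts [h.1 rfl, G.irrefl hb, G.irrefl ha, h.not_adj_of_adj ha hb]
  iterate 2
    rw [coe_insert, coe_inter]
    exact Set.insert_subset_insert Set.inter_subset_left
  · rw [card_insert_of_notMem hyx, card_insert_of_notMem hxy]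
    omega

theorem Remote.card_interedges_eq {s : Finset V} (hx : x ∈ s) (hy : y ∈ s)
    (h : Remote G x y) :
    #(G.interedges s s) = #(G.interedges (s \ {x, y}) (s \ {x, y})) +
      2 * (#(G.neighborFinset x ∩ s) + #(G.neighborFinset y ∩ s)) := by
  have hs : s \ {x, y} = (s.erase x).erase y := by
    ext; simp only [mem_sdiff, mem_insert, mem_singleton, mem_erase]; tauto
  have hN : G.neighborFinset y ∩ s.erase x = G.neighborFinset y ∩ s := by
    rw [← sdiff_singleton_eq_erase,
      neighborFinset_inter_sdiff (disjoint_singleton_right.2 (by simp [h.symm.2.1]))]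
  rw [card_interedges_erase hx, card_interedges_erase (mem_erase.2 ⟨h.1.symm, hy⟩), hN, hs]
  ring

theorem Remote.card_interedges_add_card_compl {s A B : Finset V} (hx : x ∈ s) (hy : y ∈ s)
    (h : Remote G x y) (hAB : Disjoint A B) (hcov : A ∪ B = s \ {x, y})
    (hA : G.IsIndepSet A) (hB : G.IsIndepSet B) :
    #(G.interedges s s) + 2 * #(Gᶜ.interedges A B) =
      2 * (#A * #B + #(G.neighborFinset x ∩ A) + #(G.neighborFinset x ∩ B) +
        #(G.neighborFinset y ∩ A) + #(G.neighborFinset y ∩ B)) := by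
  have hcount := card_interedges_union_add_card_compl hAB hA hB
  rw [hcov] at hcount
  rw [h.card_interedges_eq hx hy,
    card_neighborFinset_inter_eq_add hAB hcov h.disjoint_neighborFinset_pair,
    card_neighborFinset_inter_eq_add hAB hcov (pair_comm x y ▸ h.symm.disjoint_neighborFinset_pair)]
  omega

theorem Remote.mul_add_mul_le_card_compl (hG : G.CliqueFree 3) (h : Remote G x y)
    {A B : Finset V} (hAB : Disjoint A B) :
    #(G.neighborFinset x ∩ A) * #(G.neighborFinset x ∩ B) +
      #(G.neighborFinset y ∩ A) * #(G.neighborFinset y ∩ B) ≤ #(Gᶜ.interedges A B) := by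
  rw [← card_product, ← card_product, ← card_union_of_disjoint (disjoint_product.2 (Or.inl
    (h.disjoint_neighborFinset.mono inter_subset_left inter_subset_left)))]
  exact card_le_card (union_subset (product_subset_compl_interedges hG hAB x)
    (product_subset_compl_interedges hG hAB y))

theorem Remote.card_interedges_le (hG : G.CliqueFree 3) {s : Finset V}
    (hs : ¬ G.IsBipartiteOn s) (hx : x ∈ s) (hy : y ∈ s) (h : Remote G x y) :
    #(G.interedges s s) ≤ 2 * ((#s - 1) ^ 2 / 4) := by
  have hsum := h.card_neighborFinset_inter_add_lt hG hs hx hy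
  have hcard := card_sdiff_pair_add_two hx hy h.1
  by_cases hbip : G.IsBipartiteOn (s \ {x, y})
  · obtain ⟨A, B, hAB, hcov, hA, hB⟩ := hbip
    have he := h.card_interedges_add_card_compl hx hy hAB hcov hA hB
    have hM := h.mul_add_mul_le_card_compl hG hAB
    have hdx := card_neighborFinset_inter_eq_add hAB hcov h.disjoint_neighborFinset_pair
    have hdy := card_neighborFinset_inter_eq_add hAB hcov
      (pair_comm x y ▸ h.symm.disjoint_neighborFinset_pair)
    have hA' := h.card_inter_add_card_inter_le A
    have hB' := h.card_inter_add_card_inter_le B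
    have hab : #A + #B = #(s \ {x, y}) := by rw [← card_union_of_disjoint hAB, hcov]
    rw [show #s - 1 = #A + #B + 1 by omega]
    obtain ⟨t, ht, htA, htB⟩ :=
      exists_nonempty_nonempty_of_not_isBipartiteOn hs h.isIndepSet_pair hcov hA hB
    obtain rfl | rfl : t = x ∨ t = y := by simpa using ht
    · have := mul_add_le_sq_div_four htA.card_pos htB.card_pos hA' hB' (by omega)
      omega
    · have := mul_add_le_sq_div_four (a := #A) (b := #B) (p' := #(G.neighborFinset x ∩ A))
        (r' := #(G.neighborFinset x ∩ B)) htA.card_pos htB.card_pos (by omega) (by omega)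
        (by omega)
      omega
  · have := card_interedges_le_of_not_isBipartiteOn hG hbip
    have h1 := sq_succ_div_four (#s - 3)
    have h2 := sq_succ_div_four (#s - 2)
    rw [show #s - 3 + 1 = #s - 2 by omega] at h1
    rw [show #s - 2 + 1 = #s - 1 by omega] at h2
    rw [show #(s \ {x, y}) - 1 = #s - 3 by omega] at this
    rw [h.card_interedges_eq hx hy]
    omega

theorem Remote.card_interedges_le_of_mem_of_mem {s A B : Finset V} (h : Remote G x y)
    (hAB : Disjoint A B) (hcov : A ∪ B = s) (hA : G.IsIndepSet A) (hB : G.IsIndepSet B)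
    (hx : x ∈ A) (hy : y ∈ A) : #(G.interedges s s) ≤ 2 * ((#s - 1) ^ 2 / 4) := by
  have hxy : {x, y} ⊆ A := insert_subset hx (singleton_subset_iff.2 hy)
  have hcov' : A \ {x, y} ∪ B = s \ {x, y} := by
    rw [← hcov, union_sdiff_distrib, sdiff_eq_self_of_disjoint (hAB.symm.mono_right hxy)]
  have hnA : ∀ v ∈ A, G.neighborFinset v ∩ (A \ {x, y}) = ∅ := fun v hv =>
    eq_empty_of_forall_notMem fun w hw => by
      simp only [mem_inter, mem_neighborFinset, mem_sdiff] at hw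
      exact hA hv hw.2.1 hw.1.ne hw.1
  have hxs := hcov ▸ mem_union_left B hx
  have hys := hcov ▸ mem_union_left B hy
  have he := h.card_interedges_add_card_compl hxs hys (hAB.mono_left sdiff_subset) hcov'
    (hA.mono (by simp)) hB
  have hB' := h.card_inter_add_card_inter_le B
  have hq := mul_le_sq_div_four (#(A \ {x, y}) + 1) #B
  have hcard := card_sdiff_pair_add_two hxs hys h.1
  rw [← hcov', card_union_of_disjoint (hAB.mono_left sdiff_subset)] at hcard
  rw [hnA x hx, hnA y hy, card_empty] at he
  rw [show #(A \ {x, y}) + 1 + #B = #s - 1 by omega, add_mul, one_mul] at hq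
  omega

theorem Remote.degree_add_eq_and_meets (hG : G.CliqueFree 3)
    (hnb : ¬ G.IsBipartiteOn univ)
    (hq : 2 * ((Fintype.card V - 1) ^ 2 / 4) ≤ #(G.interedges univ univ))
    (h : Remote G x y) (hI : ¬ G.IsBipartiteOn (univ \ {x, y})) :
    G.degree x + G.degree y + 3 = Fintype.card V ∧
      ∀ u v, Remote G u v → u = x ∨ u = y ∨ v = x ∨ v = y := by
  have hsum := h.card_neighborFinset_inter_add_lt hG hnb (mem_univ x) (mem_univ y)
  have he := h.card_interedges_eq (mem_univ x) (mem_univ y)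
  have hA := card_interedges_le_of_not_isBipartiteOn hG hI
  have hcard := card_sdiff_pair_add_two (mem_univ x) (mem_univ y) h.1
  have h1 := sq_succ_div_four (Fintype.card V - 3)
  have h2 := sq_succ_div_four (Fintype.card V - 2)
  simp only [inter_univ, card_neighborFinset_eq_degree, card_univ] at hsum he hcard
  rw [show Fintype.card V - 3 + 1 = Fintype.card V - 2 by omega] at h1
  rw [show Fintype.card V - 2 + 1 = Fintype.card V - 1 by omega] at h2
  rw [show #(univ \ {x, y}) - 1 = Fintype.card V - 3 by omega] at hA
  refine ⟨by omega, fun u v huv => ?_⟩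
  by_contra! hne
  have := huv.card_interedges_le hG hI (by simp [hne.1, hne.2.1])
    (by simp [hne.2.2.1, hne.2.2.2])
  rw [show #(univ \ {x, y}) - 1 = Fintype.card V - 3 by omega] at this
  omega

theorem Remote.exists_remote_eq_or_eq (hG : G.CliqueFree 3) (hnb : ¬ G.IsBipartiteOn univ)
    (hq : 2 * ((Fintype.card V - 1) ^ 2 / 4) ≤ #(G.interedges univ univ))
    (h : Remote G x y) {A B : Finset V} (hAB : Disjoint A B) (hcov : A ∪ B = univ \ {x, y})
    (hA : G.IsIndepSet A) (hB : G.IsIndepSet B) (hxA : (G.neighborFinset x ∩ A).Nonempty)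
    (hxB : (G.neighborFinset x ∩ B).Nonempty) (hyA : G.neighborFinset y ∩ A = ∅) :
    ∃ β, ∀ u v, Remote G u v → s(u, v) = s(x, y) ∨ s(u, v) = s(y, β) := by
  have he := h.card_interedges_add_card_compl (mem_univ x) (mem_univ y) hAB hcov hA hB
  have hM := card_le_card (product_subset_compl_interedges hG hAB x)
  have hsum := h.card_neighborFinset_inter_add_lt hG hnb (mem_univ x) (mem_univ y)
  rw [card_neighborFinset_inter_eq_add hAB hcov h.disjoint_neighborFinset_pair,
    card_neighborFinset_inter_eq_add hAB hcov
      (pair_comm x y ▸ h.symm.disjoint_neighborFinset_pair), hyA, card_empty, card_univ] at hsum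
  have hB' := h.card_inter_add_card_inter_le B
  have hq' := mul_le_sq_div_four #B (#A + 1)
  have hcard := card_sdiff_pair_add_two (mem_univ x) (mem_univ y) h.1
  rw [← hcov, card_union_of_disjoint hAB, card_univ] at hcard
  rw [hyA, card_empty] at he
  rw [card_product] at hM
  rw [show #B + (#A + 1) = Fintype.card V - 1 by omega,
    show #B * (#A + 1) = #A * #B + #B by ring] at hq'
  have hpx := hxA.card_pos
  have hrx1 := hxB.card_pos
  -- Equality in the count: `x` has a single neighbour `β` in `B`, `y` is adjacent to the rest
  -- of `B`, and the only non-edges between `A` and `B` join `N x ∩ A` to `β`.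
  have hrx : #(G.neighborFinset x ∩ B) = 1 := by
    by_contra hne
    have := Nat.mul_le_mul_left #(G.neighborFinset x ∩ A)
      (by omega : 2 ≤ #(G.neighborFinset x ∩ B))
    omega
  rw [hrx, mul_one] at hM
  obtain ⟨β, hβ⟩ := card_eq_one.1 hrx
  have hβ' : β ∈ G.neighborFinset x ∩ B := hβ ▸ mem_singleton_self β
  rw [mem_inter, mem_neighborFinset] at hβ'
  have hcompl : Gᶜ.interedges A B = (G.neighborFinset x ∩ A) ×ˢ {β} :=
    (eq_of_subset_of_card_le (hβ ▸ product_subset_compl_interedges hG hAB x)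
      (by rw [card_product, card_singleton]; omega)).symm
  have hry : #(G.neighborFinset y ∩ B) + 1 = #B := by omega
  have hyB : G.neighborFinset y ∩ B = B.erase β := by
    refine eq_of_subset_of_card_le (fun b hb => mem_erase.2 ⟨?_, (mem_inter.1 hb).2⟩) ?_
    · rintro rfl
      exact h.not_adj_of_adj hβ'.1 ((G.mem_neighborFinset _ _).1 (mem_inter.1 hb).1)
    · rw [card_erase_of_mem hβ'.2]
      omega
  obtain ⟨w₀, hw₀⟩ := exists_adj_of_le_card_interedges hG hnb hq y
  have hw₀B : w₀ ∈ B.erase β := by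
    rw [← hyB, mem_inter, mem_neighborFinset]
    refine ⟨hw₀, (mem_union.1 (hcov ▸ ?_ : w₀ ∈ A ∪ B)).resolve_left fun hA' => ?_⟩
    · simp only [mem_sdiff, mem_univ, mem_insert, mem_singleton, not_or, true_and]
      exact ⟨fun hx => h.2.1 (hx ▸ hw₀).symm, hw₀.ne'⟩
    · simpa [hyA] using mem_inter.2 ⟨(G.mem_neighborFinset _ _).2 hw₀, hA'⟩
  obtain ⟨α₁, hα₁, hα₁x⟩ := exists_mem_notMem_of_card_lt_card
    (s := G.neighborFinset x ∩ A) (t := A) (by omega)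
  obtain ⟨α₀, hα₀⟩ := hxA
  rw [mem_inter, mem_neighborFinset] at hα₀
  refine ⟨β, fun u v huv => remote_eq_or_eq_of_forall_adj ?_ ?_ ?_ hβ'.2 hβ'.1 hα₀.2 hα₀.1
    hα₁ (by simpa [hα₁] using hα₁x) (mem_erase.1 hw₀B).2 (mem_erase.1 hw₀B).1 huv⟩
  · intro t
    by_cases hxt : t = x
    · exact .inl hxt
    by_cases hyt : t = y
    · exact .inr (.inl hyt)
    exact .inr (.inr (mem_union.1 (hcov ▸ by simp [hxt, hyt])))
  · intro a ha b hb
    by_contra! hab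
    have : (a, b) ∈ Gᶜ.interedges A B :=
      Gᶜ.mk_mem_interedges_iff.2 ⟨ha, hb, (compl_adj ..).2 ⟨hAB.forall_ne_finset ha hb, hab.1⟩⟩
    rw [hcompl, mem_product, mem_singleton, mem_inter, mem_neighborFinset] at this
    exact hab.2 this.1.1 this.2
  · intro b hb hbβ
    have := hyB ▸ mem_erase.2 ⟨hbβ, hb⟩
    exact (G.mem_neighborFinset _ _).1 (mem_inter.1 this).1

theorem Remote.ncard_le_two_of_isBipartiteOn (hG : G.CliqueFree 3)
    (hnb : ¬ G.IsBipartiteOn univ)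
    (hq : 2 * ((Fintype.card V - 1) ^ 2 / 4) ≤ #(G.interedges univ univ))
    (h : Remote G x y) (hbip : G.IsBipartiteOn (univ \ {x, y})) :
    {e : Sym2 V | ∃ u v, e = s(u, v) ∧ Remote G u v}.ncard ≤ 2 := by
  obtain ⟨A, B, hAB, hcov, hA, hB⟩ := hbip
  obtain ⟨t, ht, htA, htB⟩ :=
    exists_nonempty_nonempty_of_not_isBipartiteOn hnb h.isIndepSet_pair hcov hA hB
  wlog htx : t = x generalizing x y
  · exact this h.symm (pair_comm x y ▸ hcov) (pair_comm x y ▸ ht) (by simpa [htx] using ht)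
  subst htx
  by_cases hyA : G.neighborFinset y ∩ A = ∅
  · obtain ⟨β, hβ⟩ := h.exists_remote_eq_or_eq hG hnb hq hAB hcov hA hB htA htB hyA
    exact ncard_setOf_sym2_le_two _ _ hβ
  by_cases hyB : G.neighborFinset y ∩ B = ∅
  · obtain ⟨β, hβ⟩ := h.exists_remote_eq_or_eq hG hnb hq hAB.symm (union_comm A B ▸ hcov)
      hB hA htB htA hyB
    exact ncard_setOf_sym2_le_two _ _ hβ
  have he := h.card_interedges_add_card_compl (mem_univ t) (mem_univ y) hAB hcov hA hB
  have hM := h.mul_add_mul_le_card_compl hG hAB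
  have hsum := h.card_neighborFinset_inter_add_lt hG hnb (mem_univ t) (mem_univ y)
  rw [card_neighborFinset_inter_eq_add hAB hcov h.disjoint_neighborFinset_pair,
    card_neighborFinset_inter_eq_add hAB hcov
      (pair_comm t y ▸ h.symm.disjoint_neighborFinset_pair), card_univ] at hsum
  have hcard := card_sdiff_pair_add_two (mem_univ t) (mem_univ y) h.1
  rw [← hcov, card_union_of_disjoint hAB, card_univ] at hcard
  have := mul_add_lt_sq_div_four htA.card_pos htB.card_pos
    (nonempty_iff_ne_empty.2 hyA).card_pos (nonempty_iff_ne_empty.2 hyB).card_pos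
    (a := #A) (b := #B) (by omega)
  rw [show #A + #B + 1 = Fintype.card V - 1 by omega] at this
  omega

theorem Remote.insert_neighborFinset_subset {c : V} (h : Remote G c y) :
    insert y (G.neighborFinset y) ⊆ (insert c (G.neighborFinset c))ᶜ := by
  intro t ht
  simp only [mem_insert, mem_neighborFinset, mem_compl, not_or] at ht ⊢
  rcases ht with rfl | ht
  exacts [⟨h.1.symm, h.2.1⟩, ⟨fun htc => h.2.1 (htc ▸ ht).symm, fun hct => h.2.2 t ⟨hct, ht.symm⟩⟩]

theorem not_remote_triangle {z : V} (hdeg : G.degree x + G.degree y + 3 = Fintype.card V)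
    (hz : ∃ w, G.Adj z w) (hxy : Remote G x y) (hxz : Remote G x z) (hyz : Remote G y z) :
    False := by
  obtain ⟨w, hw⟩ := hz
  have hW := card_compl_insert_neighborFinset (G := G) x
  have hsub : insert z (insert y (G.neighborFinset y)) ⊆ (insert x (G.neighborFinset x))ᶜ :=
    insert_subset (hxz.insert_neighborFinset_subset (mem_insert_self _ _))
      hxy.insert_neighborFinset_subset
  have hzy : z ∉ insert y (G.neighborFinset y) := by simp [hyz.1.symm, hyz.2.1]
  have heq := eq_of_subset_of_card_le hsub (by
    rw [card_insert_of_notMem hzy, card_insert_of_notMem (G.notMem_neighborFinset_self y),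
      card_neighborFinset_eq_degree]
    omega)
  have hwW := hxz.insert_neighborFinset_subset
    (mem_insert_of_mem ((G.mem_neighborFinset _ _).2 hw))
  rw [← heq, mem_insert, mem_insert, mem_neighborFinset] at hwW
  rcases hwW with rfl | rfl | hyw
  exacts [G.irrefl hw, hyz.2.1 hw.symm, hyz.not_adj_of_adj hyw hw]

theorem Remote.adj_or_adj_of_degree_add {c ℓ ℓ₁ ℓ₂ : V}
    (hdeg : G.degree c + G.degree ℓ + 3 = Fintype.card V) (h : Remote G c ℓ)
    (h₁ : Remote G c ℓ₁) (h₂ : Remote G c ℓ₂) (hℓ₁ : ℓ ≠ ℓ₁) (hℓ₂ : ℓ ≠ ℓ₂) (h₁₂ : ℓ₁ ≠ ℓ₂) :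
    G.Adj ℓ ℓ₁ ∨ G.Adj ℓ ℓ₂ := by
  by_contra! hna
  have hW := card_compl_insert_neighborFinset (G := G) c
  have hsub : insert ℓ₁ (insert ℓ₂ (insert ℓ (G.neighborFinset ℓ))) ⊆
      (insert c (G.neighborFinset c))ᶜ :=
    insert_subset (h₁.insert_neighborFinset_subset (mem_insert_self _ _))
      (insert_subset (h₂.insert_neighborFinset_subset (mem_insert_self _ _))
        h.insert_neighborFinset_subset)
  have := card_le_card hsub
  rw [card_insert_of_notMem (by simp [h₁₂, hℓ₁.symm, hna.1]),
    card_insert_of_notMem (by simp [hℓ₂.symm, hna.2]),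
    card_insert_of_notMem (G.notMem_neighborFinset_self ℓ), card_neighborFinset_eq_degree] at this
  omega

theorem Remote.false_of_adj_of_adj (hG : G.CliqueFree 3) {c ℓ ℓ₁ ℓ₂ α : V}
    (hdeg : G.degree c + G.degree ℓ + 3 = Fintype.card V)
    (hdeg₁ : G.degree c + G.degree ℓ₁ + 3 = Fintype.card V)
    (hmeet : ∀ u v, Remote G u v → u = c ∨ u = ℓ₁ ∨ v = c ∨ v = ℓ₁) (hα : G.Adj c α)
    (h : Remote G c ℓ) (h₁ : Remote G c ℓ₁) (h₂ : Remote G c ℓ₂) (h₁₂ : ℓ₁ ≠ ℓ₂)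
    (hadj₁ : G.Adj ℓ ℓ₁) (hadj₂ : G.Adj ℓ ℓ₂) : False := by
  have hW := card_compl_insert_neighborFinset (G := G) c
  have hsub : G.neighborFinset ℓ ∪ G.neighborFinset ℓ₁ ⊆ (insert c (G.neighborFinset c))ᶜ :=
    union_subset ((subset_insert _ _).trans h.insert_neighborFinset_subset)
      ((subset_insert _ _).trans h₁.insert_neighborFinset_subset)
  have hcard := card_le_card hsub
  rw [card_union_of_disjoint (disjoint_neighborFinset_of_adj hG hadj₁),
    card_neighborFinset_eq_degree, card_neighborFinset_eq_degree] at hcard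
  have hN : {ℓ₁, ℓ₂} = G.neighborFinset ℓ :=
    eq_of_subset_of_card_le (insert_subset ((G.mem_neighborFinset _ _).2 hadj₁)
      (singleton_subset_iff.2 ((G.mem_neighborFinset _ _).2 hadj₂)))
      (by rw [card_pair h₁₂, card_neighborFinset_eq_degree]; omega)
  -- All neighbours of `ℓ` are far from `c`, so `ℓ` and `α` form a remote pair avoiding `c, ℓ₁`.
  have hrem : Remote G ℓ α := by
    refine ⟨fun hℓα => h.2.1 (hℓα ▸ hα), h.not_adj_of_adj hα, fun t ht => ?_⟩
    have htN : t ∈ ({ℓ₁, ℓ₂} : Finset V) := hN ▸ (G.mem_neighborFinset _ _).2 ht.1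
    rw [mem_insert, mem_singleton] at htN
    rcases htN with rfl | rfl
    exacts [h₁.not_adj_of_adj hα ht.2, h₂.not_adj_of_adj hα ht.2]
  rcases hmeet ℓ α hrem with hℓ | hℓ | hα' | hα'
  exacts [h.1 hℓ.symm, hadj₁.ne hℓ, hα.ne hα'.symm, h₁.2.1 (hα' ▸ hα)]

theorem not_remote_star (hG : G.CliqueFree 3) {c y z w : V}
    (hdeg : ∀ v, Remote G c v → G.degree c + G.degree v + 3 = Fintype.card V)
    (hmeet : ∀ v, Remote G c v → ∀ u u', Remote G u u' → u = c ∨ u = v ∨ u' = c ∨ u' = v)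
    (hc : ∃ α, G.Adj c α) (hy : Remote G c y) (hz : Remote G c z) (hw : Remote G c w)
    (hyz : y ≠ z) (hyw : y ≠ w) (hzw : z ≠ w) : False := by
  obtain ⟨α, hα⟩ := hc
  have center : ∀ {ℓ ℓ₁ ℓ₂}, Remote G c ℓ → Remote G c ℓ₁ → Remote G c ℓ₂ → ℓ₁ ≠ ℓ₂ →
      G.Adj ℓ ℓ₁ → G.Adj ℓ ℓ₂ → False := fun h h₁ h₂ h₁₂ =>
    h.false_of_adj_of_adj hG (hdeg _ h) (hdeg _ h₁) (hmeet _ h₁) hα h₁ h₂ h₁₂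
  rcases hy.adj_or_adj_of_degree_add (hdeg y hy) hz hw hyz hyw hzw with hyz' | hyw' <;>
    rcases hw.adj_or_adj_of_degree_add (hdeg w hw) hy hz hyw.symm hzw.symm hyz with hwy | hwz
  · exact center hy hz hw hzw hyz' hwy.symm
  · exact center hz hy hw hyw hyz'.symm hwz.symm
  · rcases hz.adj_or_adj_of_degree_add (hdeg z hz) hy hw hyz.symm hzw hyw with hzy | hzw'
    · exact center hy hz hw hzw hzy.symm hyw'
    · exact center hw hy hz hyz hyw'.symm hzw'.symm
  · exact center hw hy hz hyz hyw'.symm hwz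

theorem ncard_remote_le_two (hG : G.CliqueFree 3) (hnb : ¬ G.IsBipartiteOn univ)
    (hq : 2 * ((Fintype.card V - 1) ^ 2 / 4) ≤ #(G.interedges univ univ)) :
    {e : Sym2 V | ∃ u v, e = s(u, v) ∧ Remote G u v}.ncard ≤ 2 := by
  by_contra! hlt
  have hI : ∀ {x y}, Remote G x y → ¬ G.IsBipartiteOn (univ \ {x, y}) := fun h hb =>
    hlt.not_ge (h.ncard_le_two_of_isBipartiteOn hG hnb hq hb)
  have hiso := exists_adj_of_le_card_interedges hG hnb hq
  have hdeg := fun {x y} (h : Remote G x y) => (h.degree_add_eq_and_meets hG hnb hq (hI h)).1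
  have hmeet := fun {x y} (h : Remote G x y) => (h.degree_add_eq_and_meets hG hnb hq (hI h)).2
  refine hlt.not_ge (ncard_setOf_sym2_le_two_of_meet (fun _ _ h => h.symm) (fun _ h => h.1 rfl)
    (fun _ _ _ _ h => hmeet h _ _) (fun c y z w hy hz hw => ?_)
    (fun _ _ z hxy hxz hyz => not_remote_triangle (hdeg hxy) (hiso z) hxy hxz hyz))
  by_contra! hne
  exact not_remote_star hG (fun _ => hdeg) (fun _ => hmeet) (hiso c) hy hz hw hne.1 hne.2.1
    hne.2.2

end Remote

/-- Structure of triangle-free graphs with at least ((n-1)^2)/4 edges. -/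
theorem trianglefree_structure {V : Type*} [Fintype V] [DecidableEq V] (n : ℕ)
    (hn : Fintype.card V = n) (G : SimpleGraph V) [DecidableRel G.Adj]
    (hTF : G.CliqueFree 3) (hE : (n - 1) ^ 2 / 4 ≤ G.edgeFinset.card) :
    (∃ P : Set V, (∀ x y : V, G.Adj x y → (x ∈ P ↔ y ∉ P)) ∧
      ((n - 1) ^ 2 / 4 < G.edgeFinset.card →
        ∀ x y : V, ((x ∈ P ∧ y ∈ P) ∨ (x ∉ P ∧ y ∉ P)) → ¬ Remote G x y)) ∨
    ((¬ ∃ P : Set V, ∀ x y : V, G.Adj x y → (x ∈ P ↔ y ∉ P)) ∧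
      {s : Sym2 V | ∃ x y : V, s = s(x, y) ∧ Remote G x y}.ncard ≤ 2 ∧
      ((n - 1) ^ 2 / 4 < G.edgeFinset.card → ∀ x y : V, ¬ Remote G x y)) := by
  subst hn
  have hcount := G.card_interedges_univ
  by_cases hbip : G.IsBipartiteOn univ
  · obtain ⟨A, B, hAB, hcov, hA, hB⟩ := hbip
    have hAB' : ∀ v, v ∈ A ∨ v ∈ B := fun v => mem_union.1 (hcov ▸ mem_univ v)
    refine .inl ⟨A, fun x y h => by simpa using SimpleGraph.mem_iff_notMem_of_adj hAB' hA hB h,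
      fun hlt x y hside h => ?_⟩
    have : #(G.interedges univ univ) ≤ 2 * ((#(univ : Finset V) - 1) ^ 2 / 4) := by
      simp only [mem_coe] at hside
      rcases hside with ⟨hx, hy⟩ | ⟨hx, hy⟩
      · exact h.card_interedges_le_of_mem_of_mem hAB hcov hA hB hx hy
      · exact h.card_interedges_le_of_mem_of_mem hAB.symm (union_comm A B ▸ hcov) hB hA
          ((hAB' x).resolve_left hx) ((hAB' y).resolve_left hy)
    rw [card_univ] at this
    omega
  · refine .inr ⟨fun ⟨P, hP⟩ => hbip (SimpleGraph.isBipartiteOn_univ_of_forall_adj P hP),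
      ncard_remote_le_two hTF hbip (by omega), fun hlt x y h => ?_⟩
    have := h.card_interedges_le hTF hbip (mem_univ x) (mem_univ y)
    rw [card_univ] at this
    omega
end

section
/- Let G be a simple graph on n vertices and let T = T(G) be the graph on the same vertex set in which two distinct vertices x, y are adjacent if and only if there exists a vertex z with xz and zy both edges of G. Then the number of edges of T is at least the number of edges of G minus ⌊n/2⌋, i.e. |E(T)| ≥ |E(G)| − ⌊n/2⌋. -/
/-- The graph T(G): two distinct vertices are adjacent iff they are joined by a path
of length 2 in G. -/
def pathTwoGraph {V : Type*} (G : SimpleGraph V) : SimpleGraph V where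
  Adj x y := x ≠ y ∧ ∃ z : V, G.Adj x z ∧ G.Adj z y
  symm := by
    refine ⟨?_⟩
    rintro x y ⟨hxy, z, h1, h2⟩
    exact ⟨hxy.symm, z, h2.symm, h1.symm⟩
  loopless := by
    refine ⟨?_⟩
    rintro x ⟨h, -⟩
    exact h rfl

/-!
Write `N₂(u)` for the set of endpoints of walks of length two starting at `u`. Apart from `u`
itself these are `T(G)`-neighbours of `u`, so `∑ |N₂(u)| ≤ 2 |E(T)| + n`. Conversely, every
neighbour `v` of `u` has `N(v) ⊆ N₂(u)`, so `|N₂(u)| ≥ deg v`; averaging over the neighbours,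
`∑ᵤ |N₂(u)| ≥ ∑ᵤ ∑_{v ~ u} deg v / deg u`, and grouping the two orientations of each edge with
`a / b + b / a ≥ 2` bounds this below by `2 |E(G)|`.
-/

open Finset

namespace SimpleGraph

variable {V : Type*} [Fintype V] (G : SimpleGraph V) [DecidableRel G.Adj]

theorem sum_sum_neighborFinset_comm {M : Type*} [AddCommMonoid M] (f : V → V → M) :
    ∑ u, ∑ v ∈ G.neighborFinset u, f u v = ∑ u, ∑ v ∈ G.neighborFinset u, f v u :=
  Finset.sum_comm' (by simp [adj_comm])

theorem sum_degree_le_sum_sum_div {K : Type*} [Field K] [LinearOrder K] [IsStrictOrderedRing K]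
    (w : V → K) (hw : ∀ u v, G.Adj u v → 0 < w u) :
    ∑ u, (G.degree u : K) ≤ ∑ u, ∑ v ∈ G.neighborFinset u, w v / w u := by
  have hpair : ∀ u, ∀ v ∈ G.neighborFinset u, (2 : K) ≤ w v / w u + w u / w v := by
    intro u v hv
    have hu := hw u v ((G.mem_neighborFinset u v).1 hv)
    have hv := hw v u ((G.mem_neighborFinset u v).1 hv).symm
    rw [div_add_div _ _ hu.ne' hv.ne', le_div_iff₀ (by positivity)]
    nlinarith [sq_nonneg (w u - w v)]
  have h2 : 2 * ∑ u, (G.degree u : K) ≤ 2 * ∑ u, ∑ v ∈ G.neighborFinset u, w v / w u :=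
    calc 2 * ∑ u, (G.degree u : K) = ∑ u, ∑ _v ∈ G.neighborFinset u, (2 : K) := by
          simp [mul_sum, mul_comm]
      _ ≤ ∑ u, ∑ v ∈ G.neighborFinset u, (w v / w u + w u / w v) :=
          sum_le_sum fun u _ => sum_le_sum (hpair u)
      _ = 2 * ∑ u, ∑ v ∈ G.neighborFinset u, w v / w u := by
          rw [two_mul]
          simp only [sum_add_distrib]
          rw [G.sum_sum_neighborFinset_comm fun u v => w u / w v]
  linarith

variable [DecidableEq V]

/-- The vertices reached from `u` by a walk of length two, `u` itself included unless
`u` is isolated. -/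
def twoStepFinset (u : V) : Finset V :=
  (G.neighborFinset u).biUnion fun v => G.neighborFinset v

theorem degree_le_card_twoStepFinset {u v : V} (h : G.Adj u v) :
    G.degree v ≤ #(G.twoStepFinset u) :=
  card_le_card <|
    subset_biUnion_of_mem (fun v => G.neighborFinset v) ((G.mem_neighborFinset u v).2 h)

theorem card_twoStepFinset_le [DecidableRel (pathTwoGraph G).Adj] (u : V) :
    #(G.twoStepFinset u) ≤ (pathTwoGraph G).degree u + 1 := by
  have hsub : G.twoStepFinset u ⊆ insert u ((pathTwoGraph G).neighborFinset u) := by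
    intro w hw
    obtain ⟨z, huz, hzw⟩ := mem_biUnion.1 hw
    rcases eq_or_ne u w with rfl | hne
    · exact mem_insert_self _ _
    · exact mem_insert_of_mem ((mem_neighborFinset _ _ _).2
        ⟨hne, z, (G.mem_neighborFinset _ _).1 huz, (G.mem_neighborFinset _ _).1 hzw⟩)
  exact (card_le_card hsub).trans (card_insert_le _ _)

theorem sum_degree_le_sum_card_twoStepFinset :
    ∑ u, G.degree u ≤ ∑ u, #(G.twoStepFinset u) := by
  suffices h : ∑ u, (G.degree u : ℚ) ≤ ∑ u, (#(G.twoStepFinset u) : ℚ) by exact_mod_cast h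
  refine (G.sum_degree_le_sum_sum_div (fun u => (G.degree u : ℚ)) fun u v h => ?_).trans
    (sum_le_sum fun u _ => ?_)
  · exact_mod_cast G.degree_pos_iff_exists_adj u |>.2 ⟨v, h⟩
  · calc ∑ v ∈ G.neighborFinset u, (G.degree v : ℚ) / G.degree u
        ≤ ∑ _v ∈ G.neighborFinset u, (#(G.twoStepFinset u) : ℚ) / G.degree u :=
          sum_le_sum fun v hv => div_le_div_of_nonneg_right
            (by exact_mod_cast G.degree_le_card_twoStepFinset ((G.mem_neighborFinset u v).1 hv))
            (Nat.cast_nonneg _)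
      _ ≤ #(G.twoStepFinset u) := by
          rw [sum_const, card_neighborFinset_eq_degree, nsmul_eq_mul]
          rcases eq_or_ne (G.degree u : ℚ) 0 with h0 | h0
          · simp [h0]
          · rw [mul_div_cancel₀ _ h0]

theorem two_mul_card_edgeFinset_le [DecidableRel (pathTwoGraph G).Adj] :
    2 * #G.edgeFinset ≤ 2 * #(pathTwoGraph G).edgeFinset + Fintype.card V := by
  have h := G.sum_degree_le_sum_card_twoStepFinset.trans
    (sum_le_sum fun u _ => G.card_twoStepFinset_le u)
  rw [sum_add_distrib, sum_const, card_univ, smul_eq_mul, mul_one] at h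
  rwa [← sum_degrees_eq_twice_card_edges, ← sum_degrees_eq_twice_card_edges]

end SimpleGraph

/-- |E(T(G))| ≥ |E(G)| − ⌊n/2⌋. -/
theorem pathTwo_edge_bound {V : Type*} [Fintype V] (n : ℕ) (hn : Fintype.card V = n)
    (G : SimpleGraph V) :
    G.edgeSet.ncard - n / 2 ≤ (pathTwoGraph G).edgeSet.ncard := by
  classical
  have h := G.two_mul_card_edgeFinset_le
  simp only [← SimpleGraph.coe_edgeFinset, Set.ncard_coe_finset]
  omega
end
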